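/- arXiv:2004.08901 — 11 statements merged into one kernel-verified Lean document; each statement's English description precedes it below -/
import Mathlib

section
/- For every integer m ≥ 3, the first moment μ_1 := Σ_{1 ≤ j < 2m} j · w_m(j) equals m(m-1)(m-2)/2. -/
/-- For `1 ≤ j < 2m`, `w_m(j) = ⌊(m - 1 - |m - j|)/2⌋`. -/
def w (m j : ℤ) : ℤ := (m - 1 - |m - j|) / 2

lemma w_succ_left (m j : ℤ) (h2 : j ≤ m) : w (m+1) j = w m j := by
  unfold w
  rw [abs_of_nonneg (by omega), abs_of_nonneg (by omega)]
  omega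

lemma w_succ_right (m j : ℤ) (h1 : m + 1 ≤ j) : w (m+1) j = w m j + 1 := by
  unfold w
  rw [abs_of_nonpos (by omega), abs_of_nonpos (by omega)]
  omega

lemma w_top1 (m : ℤ) (hm : 1 ≤ m) : w (m+1) (2*m) = 0 := by
  unfold w
  rw [abs_of_nonpos (by omega)]
  omega

lemma w_top2 (m : ℤ) (hm : 0 ≤ m) : w (m+1) (2*m+1) = 0 := by
  unfold w
  rw [abs_of_nonpos (by omega)]
  omega

lemma gauss (n : ℕ) : ∑ j ∈ Finset.range n, (j : ℚ) = n * (n - 1) / 2 := by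
  induction n with
  | zero => simp
  | succ k ih => rw [Finset.sum_range_succ, ih]; push_cast; ring

/-- For every integer `m ≥ 3`, `μ_1 := Σ_{1 ≤ j < 2m} j·w_m(j) = m(m-1)(m-2)/2`. -/
theorem mu1_eq (m : ℕ) (hm : 3 ≤ m) :
    ∑ j ∈ Finset.Ico 1 (2 * m), (j : ℚ) * ((w (m : ℤ) (j : ℤ) : ℚ))
      = (m : ℚ) * ((m : ℚ) - 1) * ((m : ℚ) - 2) / 2 := by
  induction m, hm using Nat.le_induction with
  | base =>
    have : Finset.Ico 1 (2*3) = {1,2,3,4,5} := by decide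
    rw [this]
    norm_num [w]
  | succ m hm ih =>
    have hpeel : Finset.Ico 1 (2 * (m+1)) = insert (2*m+1) (insert (2*m) (Finset.Ico 1 (2*m))) := by
      ext x; simp [Finset.mem_Ico]; omega
    rw [hpeel, Finset.sum_insert (by simp),
        Finset.sum_insert (by simp [Finset.mem_Ico])]
    have e1 : w ((m:ℤ)+1) (2*(m:ℤ)+1) = 0 := w_top2 m (by positivity)
    have e2 : w ((m:ℤ)+1) (2*(m:ℤ)) = 0 := w_top1 m (by exact_mod_cast Nat.one_le_of_lt hm)
    have hsplit : Finset.Ico 1 (2*m) = Finset.Ico 1 (m+1) ∪ Finset.Ico (m+1) (2*m) := by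
      rw [Finset.Ico_union_Ico_eq_Ico (by omega) (by omega)]
    have key : ∑ j ∈ Finset.Ico 1 (2*m), (j : ℚ) * ((w ((m:ℤ)+1) (j : ℤ) : ℚ))
        = ∑ j ∈ Finset.Ico 1 (2*m), (j : ℚ) * ((w (m:ℤ) (j : ℤ) : ℚ))
          + ∑ j ∈ Finset.Ico (m+1) (2*m), (j : ℚ) := by
      rw [hsplit, Finset.sum_union (by
            apply Finset.Ico_disjoint_Ico_consecutive),
          Finset.sum_union (by apply Finset.Ico_disjoint_Ico_consecutive)]
      have hA : ∀ j ∈ Finset.Ico 1 (m+1), (j : ℚ) * ((w ((m:ℤ)+1) (j : ℤ) : ℚ))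
          = (j : ℚ) * ((w (m:ℤ) (j : ℤ) : ℚ)) := by
        intro j hj
        simp only [Finset.mem_Ico] at hj
        rw [w_succ_left m j (by exact_mod_cast Nat.lt_succ_iff.mp hj.2)]
      have hB : ∀ j ∈ Finset.Ico (m+1) (2*m), (j : ℚ) * ((w ((m:ℤ)+1) (j : ℤ) : ℚ))
          = (j : ℚ) * ((w (m:ℤ) (j : ℤ) : ℚ)) + (j : ℚ) := by
        intro j hj
        simp only [Finset.mem_Ico] at hj
        rw [w_succ_right m j (by exact_mod_cast hj.1)]
        push_cast
        ring
      rw [Finset.sum_congr rfl hA, Finset.sum_congr rfl hB, Finset.sum_add_distrib]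
      ring
    have hg : ∑ j ∈ Finset.Ico (m+1) (2*m), (j : ℚ)
        = (2*m : ℚ) * (2*m - 1) / 2 - ((m:ℚ)+1) * m / 2 := by
      have := Finset.sum_Ico_consecutive (fun j : ℕ => (j:ℚ)) (show 0 ≤ m+1 by omega) (show m+1 ≤ 2*m by omega)
      have h0 : Finset.Ico 0 (m+1) = Finset.range (m+1) := by rw [Finset.range_eq_Ico]
      have h1 : Finset.Ico 0 (2*m) = Finset.range (2*m) := by rw [Finset.range_eq_Ico]
      rw [h0, h1] at this
      have := this
      rw [gauss, gauss] at this
      push_cast at this ⊢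
      linarith
    push_cast
    rw [e1, e2, key, ih, hg]
    push_cast
    ring
end

section
/- For every integer m ≥ 3, the third moment μ_3 := Σ_{1 ≤ j < 2m} j³ · w_m(j) equals 3m²(m-1)²(m-2)/4. -/
lemma cubes (n : ℕ) : ∑ j ∈ Finset.range n, (j : ℚ) ^ 3
    = (n : ℚ) ^ 2 * ((n : ℚ) - 1) ^ 2 / 4 := by
  induction n with
  | zero => simp
  | succ n ih =>
    rw [Finset.sum_range_succ, ih]
    push_cast
    ring

lemma w_low (m j : ℤ) (h1 : 1 ≤ j) (h2 : j ≤ m) : w (m + 1) j = w m j := by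
  unfold w
  rcases abs_cases (m + 1 - j) with ⟨ha, _⟩ | ⟨ha, _⟩ <;>
  rcases abs_cases (m - j) with ⟨hb, _⟩ | ⟨hb, _⟩ <;> omega

lemma w_high (m j : ℤ) (h1 : m + 1 ≤ j) (h2 : j ≤ 2 * m - 1) :
    w (m + 1) j = w m j + 1 := by
  unfold w
  rcases abs_cases (m + 1 - j) with ⟨ha, _⟩ | ⟨ha, _⟩ <;>
  rcases abs_cases (m - j) with ⟨hb, _⟩ | ⟨hb, _⟩ <;> omega

/-- For every integer `m ≥ 3`, `μ_3 := Σ_{1 ≤ j < 2m} j³·w_m(j) = 3m²(m-1)²(m-2)/4`. -/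
theorem mu3_eq (m : ℕ) (hm : 3 ≤ m) :
    ∑ j ∈ Finset.Ico 1 (2 * m), (j : ℚ) ^ 3 * ((w (m : ℤ) (j : ℤ) : ℚ))
      = 3 * (m : ℚ) ^ 2 * ((m : ℚ) - 1) ^ 2 * ((m : ℚ) - 2) / 4 := by
  induction m, hm using Nat.le_induction with
  | base =>
    norm_num [show (2 * 3 : ℕ) = 6 by rfl, Finset.sum_Ico_eq_sum_range,
      Finset.sum_range_succ, w]
  | succ m hm ih =>
    have h2m : 2 * (m + 1) = (2 * m + 1) + 1 := by ring
    rw [h2m, Finset.sum_Ico_succ_top (by omega), Finset.sum_Ico_succ_top (by omega)]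
    have hw1 : w ((m : ℤ) + 1) (2 * (m : ℤ)) = 0 := by
      unfold w
      rcases abs_cases ((m : ℤ) + 1 - 2 * (m : ℤ)) with ⟨ha, _⟩ | ⟨ha, _⟩ <;> omega
    have hw2 : w ((m : ℤ) + 1) (2 * (m : ℤ) + 1) = 0 := by
      unfold w
      rcases abs_cases ((m : ℤ) + 1 - (2 * (m : ℤ) + 1)) with ⟨ha, _⟩ | ⟨ha, _⟩ <;> omega
    push_cast
    rw [hw1, hw2]
    rw [Int.cast_zero, mul_zero, mul_zero, add_zero, add_zero]
    have hsplit : Finset.Ico 1 (2 * m) = Finset.Ico 1 (m + 1) ∪ Finset.Ico (m + 1) (2 * m) := by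
      rw [Finset.Ico_union_Ico_eq_Ico (by omega) (by omega)]
    have hdisj : Disjoint (Finset.Ico 1 (m + 1)) (Finset.Ico (m + 1) (2 * m)) :=
      Finset.Ico_disjoint_Ico_consecutive 1 (m + 1) (2 * m)
    rw [hsplit, Finset.sum_union hdisj]
    have e1 : ∑ j ∈ Finset.Ico 1 (m + 1), (j : ℚ) ^ 3 * ((w ((m : ℤ) + 1) (j : ℤ) : ℤ) : ℚ)
        = ∑ j ∈ Finset.Ico 1 (m + 1), (j : ℚ) ^ 3 * ((w (m : ℤ) (j : ℤ) : ℤ) : ℚ) := by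
      apply Finset.sum_congr rfl
      intro j hj
      simp only [Finset.mem_Ico] at hj
      rw [w_low (m : ℤ) (j : ℤ) (by exact_mod_cast hj.1) (by exact_mod_cast (by omega : j ≤ m))]
    have e2 : ∑ j ∈ Finset.Ico (m + 1) (2 * m), (j : ℚ) ^ 3 * ((w ((m : ℤ) + 1) (j : ℤ) : ℤ) : ℚ)
        = (∑ j ∈ Finset.Ico (m + 1) (2 * m), (j : ℚ) ^ 3 * ((w (m : ℤ) (j : ℤ) : ℤ) : ℚ))
          + ∑ j ∈ Finset.Ico (m + 1) (2 * m), (j : ℚ) ^ 3 := by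
      rw [← Finset.sum_add_distrib]
      apply Finset.sum_congr rfl
      intro j hj
      simp only [Finset.mem_Ico] at hj
      rw [w_high (m : ℤ) (j : ℤ) (by exact_mod_cast hj.1)
        (by push_cast; omega)]
      push_cast
      ring
    rw [e1, e2]
    have hcomb : (∑ j ∈ Finset.Ico 1 (m + 1), (j : ℚ) ^ 3 * ((w (m : ℤ) (j : ℤ) : ℤ) : ℚ))
        + ((∑ j ∈ Finset.Ico (m + 1) (2 * m), (j : ℚ) ^ 3 * ((w (m : ℤ) (j : ℤ) : ℤ) : ℚ))
          + ∑ j ∈ Finset.Ico (m + 1) (2 * m), (j : ℚ) ^ 3)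
        = (∑ j ∈ Finset.Ico 1 (2 * m), (j : ℚ) ^ 3 * ((w (m : ℤ) (j : ℤ) : ℤ) : ℚ))
          + ∑ j ∈ Finset.Ico (m + 1) (2 * m), (j : ℚ) ^ 3 := by
      rw [hsplit, Finset.sum_union hdisj]; ring
    rw [hcomb, ih]
    have htail : ∑ j ∈ Finset.Ico (m + 1) (2 * m), (j : ℚ) ^ 3
        = (2 * (m : ℚ)) ^ 2 * (2 * (m : ℚ) - 1) ^ 2 / 4
          - ((m : ℚ) + 1) ^ 2 * ((m : ℚ) + 1 - 1) ^ 2 / 4 := by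
      rw [Finset.sum_Ico_eq_sub _ (by omega)]
      rw [show (Finset.range (2 * m)) = Finset.range (2 * m) from rfl]
      have c1 := cubes (2 * m)
      have c2 := cubes (m + 1)
      push_cast at c1 c2
      rw [c1, c2]
    rw [htail]
    push_cast
    ring
end

section
/- For integers m > 1 and 1 ≤ ℓ < 2m with ℓ even and ℓ ≠ m, and any real θ, one has Σ_{1 ≤ k < j < m} sin(θ + ℓ(k+j)π/m) = sin θ. -/
open Real

/-- For integers `m > 1` and `1 ≤ ℓ < 2m` with `ℓ` even and `ℓ ≠ m`, and any real `θ`,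
`Σ_{1 ≤ k < j < m} sin(θ + ℓ(k+j)π/m) = sin θ`. -/
theorem sum_sine_even (m ℓ : ℕ) (hm : 1 < m) (hl1 : 1 ≤ ℓ) (hl2 : ℓ < 2 * m)
    (heven : Even ℓ) (hlm : ℓ ≠ m) (θ : ℝ) :
    ∑ j ∈ Finset.Ico 1 m, ∑ k ∈ Finset.Ico 1 j,
      Real.sin (θ + (ℓ : ℝ) * ((k : ℝ) + (j : ℝ)) * Real.pi / (m : ℝ)) = Real.sin θ := by
  have hm0 : (m : ℂ) ≠ 0 := Nat.cast_ne_zero.mpr (by omega)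
  have hmR : (m : ℝ) ≠ 0 := Nat.cast_ne_zero.mpr (by omega)
  have hpi : Real.pi ≠ 0 := Real.pi_ne_zero
  set z : ℂ := Complex.exp ((ℓ : ℂ) * (Real.pi : ℂ) / (m : ℂ) * Complex.I) with hz
  have hpow : ∀ n : ℕ, z ^ n = Complex.exp ((n : ℂ) * ((ℓ : ℂ) * (Real.pi : ℂ) / (m : ℂ) * Complex.I)) := by
    intro n; rw [hz, ← Complex.exp_nat_mul]
  have hzm : z ^ m = 1 := by
    rw [hpow]
    have : (m : ℂ) * ((ℓ : ℂ) * (Real.pi : ℂ) / (m : ℂ) * Complex.I) =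
        (ℓ : ℂ) * ((Real.pi : ℂ) * Complex.I) := by field_simp
    rw [this, Complex.exp_nat_mul, Complex.exp_mul_I, Complex.cos_pi, Complex.sin_pi]
    simp [heven.neg_one_pow]
  have hz1 : z ≠ 1 := by
    rw [hz, Ne, Complex.exp_eq_one_iff]
    rintro ⟨n, hn⟩
    rw [show ((n:ℂ) * (2 * (Real.pi:ℂ) * Complex.I)) = ((n:ℂ) * (2 * (Real.pi:ℂ))) * Complex.I by ring] at hn
    have h2 : ((ℓ:ℂ) * (Real.pi:ℂ) / (m:ℂ)) = (n:ℂ) * (2 * (Real.pi:ℂ)) :=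
      mul_right_cancel₀ Complex.I_ne_zero hn
    have h3 : ((ℓ:ℝ) * Real.pi / m) = (n:ℝ) * (2 * Real.pi) := by exact_mod_cast h2
    have h4 : (ℓ:ℝ) = (n:ℝ) * (2 * m) := by
      field_simp at h3
      nlinarith [h3, Real.pi_pos]
    have h5 : (ℓ:ℤ) = n * (2 * m) := by exact_mod_cast h4
    have hl1' : (1:ℤ) ≤ ℓ := by exact_mod_cast hl1
    have hl2' : (ℓ:ℤ) < 2 * m := by exact_mod_cast hl2
    have hmz : (1:ℤ) ≤ m := by exact_mod_cast hm.le
    have hn0 : 1 ≤ n := by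
      by_contra h
      push_neg at h
      nlinarith [mul_nonneg (by linarith : (0:ℤ) ≤ -n) (by linarith : (0:ℤ) ≤ 2*(m:ℤ))]
    nlinarith [mul_le_mul_of_nonneg_right hn0 (show (0:ℤ) ≤ 2*(m:ℤ) by linarith)]
  have hz2 : z ^ 2 ≠ 1 := by
    rw [hpow, Ne, Complex.exp_eq_one_iff]
    rintro ⟨n, hn⟩
    rw [show ((n:ℂ) * (2 * (Real.pi:ℂ) * Complex.I)) = ((n:ℂ) * (2 * (Real.pi:ℂ))) * Complex.I by ring,
        show ((2:ℕ):ℂ) * ((ℓ:ℂ) * (Real.pi:ℂ) / (m:ℂ) * Complex.I) = ((2:ℂ) * ((ℓ:ℂ) * (Real.pi:ℂ) / (m:ℂ))) * Complex.I by push_cast; ring] at hn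
    have h2 : ((2:ℂ) * ((ℓ:ℂ) * (Real.pi:ℂ) / (m:ℂ))) = (n:ℂ) * (2 * (Real.pi:ℂ)) :=
      mul_right_cancel₀ Complex.I_ne_zero hn
    have h3 : (2 * ((ℓ:ℝ) * Real.pi / m)) = (n:ℝ) * (2 * Real.pi) := by exact_mod_cast h2
    have h4 : (ℓ:ℝ) = (n:ℝ) * m := by
      field_simp at h3
      nlinarith [h3, Real.pi_pos]
    have h5 : (ℓ:ℤ) = n * m := by exact_mod_cast h4
    have hl1' : (1:ℤ) ≤ ℓ := by exact_mod_cast hl1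
    have hl2' : (ℓ:ℤ) < 2 * m := by exact_mod_cast hl2
    have hmz : (1:ℤ) ≤ m := by exact_mod_cast hm.le
    have hn0 : 1 ≤ n := by
      by_contra h
      push_neg at h
      nlinarith [mul_nonneg (by linarith : (0:ℤ) ≤ -n) (by linarith : (0:ℤ) ≤ (m:ℤ))]
    have hn2 : n < 2 := by
      by_contra h
      push_neg at h
      nlinarith [mul_le_mul_of_nonneg_right h (show (0:ℤ) ≤ (m:ℤ) by linarith)]
    have hn1 : n = 1 := by omega
    apply hlm
    have : (ℓ:ℤ) = m := by rw [h5, hn1, one_mul]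
    exact_mod_cast this
  have hzsub : z - 1 ≠ 0 := sub_ne_zero.mpr hz1
  -- geometric sums
  have hrange : ∑ k ∈ Finset.range m, z ^ k = 0 := by
    rw [geom_sum_eq hz1, hzm]; simp
  have hS : ∑ k ∈ Finset.Ico 1 m, z ^ k = -1 := by
    have h0 : ∑ k ∈ Finset.Ico 0 m, z ^ k = z ^ 0 + ∑ k ∈ Finset.Ico 1 m, z ^ k :=
      Finset.sum_eq_sum_Ico_succ_bot (by omega) _
    rw [← Finset.range_eq_Ico, hrange] at h0
    simp at h0
    linear_combination -h0
  have hrange2 : ∑ k ∈ Finset.range m, (z ^ 2) ^ k = 0 := by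
    rw [geom_sum_eq hz2, ← pow_mul, mul_comm 2 m, pow_mul, hzm]
    simp
  have hT : ∑ k ∈ Finset.Ico 1 m, (z ^ 2) ^ k = -1 := by
    have h0 : ∑ k ∈ Finset.Ico 0 m, (z ^ 2) ^ k = (z ^ 2) ^ 0 + ∑ k ∈ Finset.Ico 1 m, (z ^ 2) ^ k :=
      Finset.sum_eq_sum_Ico_succ_bot (by omega) _
    rw [← Finset.range_eq_Ico, hrange2] at h0
    simp at h0
    linear_combination -h0
  -- inner sums
  have inner : ∀ j ∈ Finset.Ico 1 m, ∑ k ∈ Finset.Ico 1 j, z ^ (k + j) =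
      (z ^ j * z ^ j - z ^ j) / (z - 1) - z ^ j := by
    intro j hj
    rw [Finset.mem_Ico] at hj
    have hIco : ∑ k ∈ Finset.Ico 1 j, z ^ k = (z ^ j - 1) / (z - 1) - 1 := by
      have h0 : ∑ k ∈ Finset.Ico 0 j, z ^ k = z ^ 0 + ∑ k ∈ Finset.Ico 1 j, z ^ k :=
        Finset.sum_eq_sum_Ico_succ_bot (by omega) _
      rw [← Finset.range_eq_Ico, geom_sum_eq hz1] at h0
      rw [pow_zero] at h0
      linear_combination -h0
    calc ∑ k ∈ Finset.Ico 1 j, z ^ (k + j) = (∑ k ∈ Finset.Ico 1 j, z ^ k) * z ^ j := by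
          rw [Finset.sum_mul]; exact Finset.sum_congr rfl fun k _ => (pow_add z k j)
      _ = ((z ^ j - 1) / (z - 1) - 1) * z ^ j := by rw [hIco]
      _ = (z ^ j * z ^ j - z ^ j) / (z - 1) - z ^ j := by field_simp
  have hsum : ∑ j ∈ Finset.Ico 1 m, ∑ k ∈ Finset.Ico 1 j, z ^ (k + j) = 1 := by
    rw [Finset.sum_congr rfl inner]
    rw [Finset.sum_sub_distrib, ← Finset.sum_div, Finset.sum_sub_distrib]
    have : ∑ j ∈ Finset.Ico 1 m, z ^ j * z ^ j = ∑ j ∈ Finset.Ico 1 m, (z ^ 2) ^ j :=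
      Finset.sum_congr rfl fun j _ => by rw [← pow_mul, two_mul, pow_add]
    rw [this, hT, hS]
    field_simp
    ring
  -- main reduction
  have key : ∀ j k : ℕ, Real.sin (θ + (ℓ : ℝ) * ((k : ℝ) + (j : ℝ)) * Real.pi / (m : ℝ)) =
      (Complex.exp ((θ : ℂ) * Complex.I) * z ^ (k + j)).im := by
    intro j k
    rw [hpow, ← Complex.exp_add]
    rw [show (θ:ℂ) * Complex.I + ((k + j : ℕ) : ℂ) * ((ℓ:ℂ) * (Real.pi:ℂ) / (m:ℂ) * Complex.I) =
        ((θ + (ℓ : ℝ) * ((k : ℝ) + (j : ℝ)) * Real.pi / (m : ℝ) : ℝ) : ℂ) * Complex.I by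
      push_cast; ring]
    rw [Complex.exp_ofReal_mul_I_im]
  calc ∑ j ∈ Finset.Ico 1 m, ∑ k ∈ Finset.Ico 1 j,
        Real.sin (θ + (ℓ : ℝ) * ((k : ℝ) + (j : ℝ)) * Real.pi / (m : ℝ))
      = (∑ j ∈ Finset.Ico 1 m, ∑ k ∈ Finset.Ico 1 j,
          Complex.exp ((θ : ℂ) * Complex.I) * z ^ (k + j)).im := by
        rw [Complex.im_sum]
        refine Finset.sum_congr rfl fun j _ => ?_
        rw [Complex.im_sum]
        exact Finset.sum_congr rfl fun k _ => key j k
    _ = (Complex.exp ((θ : ℂ) * Complex.I) *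
          ∑ j ∈ Finset.Ico 1 m, ∑ k ∈ Finset.Ico 1 j, z ^ (k + j)).im := by
        rw [Finset.mul_sum]
        congr 1
        exact Finset.sum_congr rfl fun j _ => (Finset.mul_sum _ _ _).symm
    _ = Real.sin θ := by rw [hsum, mul_one, Complex.exp_ofReal_mul_I_im]
end

section
/- For integers m > 1 and 1 ≤ ℓ < 2m with ℓ odd and ℓ ≠ m, and any real θ, one has Σ_{1 ≤ k < j < m} sin(θ + ℓ(k+j)π/m) = -sin θ · cos(ℓπ/m)/(1 - cos(ℓπ/m)). -/
open Real

/-- For integers `m > 1` and `1 ≤ ℓ < 2m` with `ℓ` odd and `ℓ ≠ m`, and any real `θ`,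
`Σ_{1 ≤ k < j < m} sin(θ + ℓ(k+j)π/m) = -sin θ · cos(ℓπ/m)/(1 - cos(ℓπ/m))`. -/
theorem sum_sine_odd (m ℓ : ℕ) (hm : 1 < m) (hl1 : 1 ≤ ℓ) (hl2 : ℓ < 2 * m)
    (hodd : Odd ℓ) (hlm : ℓ ≠ m) (θ : ℝ) :
    ∑ j ∈ Finset.Ico 1 m, ∑ k ∈ Finset.Ico 1 j,
      Real.sin (θ + (ℓ : ℝ) * ((k : ℝ) + (j : ℝ)) * Real.pi / (m : ℝ)) =
    -Real.sin θ * Real.cos ((ℓ : ℝ) * Real.pi / (m : ℝ)) /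
      (1 - Real.cos ((ℓ : ℝ) * Real.pi / (m : ℝ))) := by
  have hπ := Real.pi_pos
  have hm0 : (0:ℝ) < m := by exact_mod_cast (by omega : 0 < m)
  have hl0 : (0:ℝ) < ℓ := by exact_mod_cast hl1
  set α : ℝ := (ℓ : ℝ) * Real.pi / (m : ℝ) with hαdef
  have hα0 : 0 < α := by positivity
  have hα2π : α < 2 * π := by
    rw [hαdef, div_lt_iff₀ hm0]
    have : (ℓ:ℝ) < 2 * m := by exact_mod_cast hl2
    nlinarith
  have hαπ : α ≠ π := by
    intro h
    apply hlm
    have : (ℓ:ℝ) * π = π * m := by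
      rw [hαdef, div_eq_iff (ne_of_gt hm0)] at h; linarith
    have : (ℓ:ℝ) = m := by
      have := mul_right_cancel₀ (ne_of_gt hπ) (by linarith [this] : (ℓ:ℝ) * π = (m:ℝ) * π)
      exact this
    exact_mod_cast this
  have hcos1 : Real.cos α ≠ 1 := by
    intro h
    rcases (Real.cos_eq_one_iff α).mp h with ⟨n, hn⟩
    have h1 : (0:ℝ) < n := by nlinarith
    have h2 : (n:ℝ) < 1 := by nlinarith
    have h1' : 0 < n := by exact_mod_cast h1
    have h2' : n < 1 := by exact_mod_cast h2
    omega
  set z : ℂ := Complex.exp (α * Complex.I) with hzdef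
  have hz1 : z ≠ 1 := by
    intro h
    apply hcos1
    have := congrArg Complex.re h
    rwa [hzdef, Complex.exp_ofReal_mul_I_re, Complex.one_re] at this
  have hz2 : z ^ 2 ≠ 1 := by
    intro h
    rw [hzdef, ← Complex.exp_nat_mul] at h
    rcases Complex.exp_eq_one_iff.mp h with ⟨n, hn⟩
    have him := congrArg Complex.im hn
    simp [Complex.mul_im] at him
    -- him : 2 * α = n * (2 * π)  (roughly)
    have hαn : α = n * π := by
      push_cast at him ⊢
      nlinarith [him]
    have h1 : (0:ℝ) < n := by nlinarith
    have h2 : (n:ℝ) < 2 := by nlinarith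
    have h1' : 0 < n := by exact_mod_cast h1
    have h2' : n < 2 := by exact_mod_cast h2
    interval_cases n
    · simp at hαn; exact hαπ (by linarith)
  have hzm : z ^ m = -1 := by
    rw [hzdef, ← Complex.exp_nat_mul]
    have : (m:ℂ) * (↑α * Complex.I) = (ℓ:ℕ) * (↑π * Complex.I) := by
      rw [hαdef]
      push_cast
      have : (m:ℂ) ≠ 0 := by exact_mod_cast (ne_of_gt hm0 : (m:ℝ) ≠ 0) <;> push_cast <;> simp
      field_simp
    rw [this, Complex.exp_nat_mul, Complex.exp_pi_mul_I]
    exact hodd.neg_one_pow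
  have hcm : (Real.cos α : ℂ) - 1 ≠ 0 := by
    rw [← Complex.ofReal_one, ← Complex.ofReal_sub]
    exact Complex.ofReal_ne_zero.mpr (sub_ne_zero.mpr hcos1)
  have hkey : z ^ 2 + 1 = 2 * (Real.cos α : ℂ) * z := by
    rw [hzdef, Complex.exp_mul_I]
    have hsq := Complex.sin_sq_add_cos_sq (α : ℂ)
    rw [Complex.ofReal_cos]
    linear_combination (Complex.sin (α:ℂ))^2 * Complex.I_sq - hsq
  have hz1' : z - 1 ≠ 0 := sub_ne_zero.mpr hz1
  have hz2' : z ^ 2 - 1 ≠ 0 := sub_ne_zero.mpr hz2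
  have hS : ∑ j ∈ Finset.Ico 1 m, (z ^ j * ∑ k ∈ Finset.Ico 1 j, z ^ k)
      = ((Real.cos α / (Real.cos α - 1) : ℝ) : ℂ) := by
    have h1 : ∀ j ∈ Finset.Ico 1 m, z ^ j * ∑ k ∈ Finset.Ico 1 j, z ^ k
        = ((z ^ 2) ^ j - z * z ^ j) / (z - 1) := by
      intro j hj
      rw [geom_sum_Ico hz1 (Finset.mem_Ico.mp hj).1]
      field_simp
      ring
    rw [Finset.sum_congr rfl h1, ← Finset.sum_div, Finset.sum_sub_distrib, ← Finset.mul_sum,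
      geom_sum_Ico hz2 hm.le, geom_sum_Ico hz1 hm.le, ← pow_mul, mul_comm 2 m, pow_mul, hzm]
    rw [Complex.ofReal_div, Complex.ofReal_sub, Complex.ofReal_one]
    have hsq : (z - 1) ^ 2 ≠ 0 := pow_ne_zero 2 hz1'
    have e : (((-1:ℂ)) ^ 2 - z ^ 2) / (z ^ 2 - 1) - z * ((-1 - z) / (z - 1))
        = (z ^ 2 + 1) / (z - 1) := by
      field_simp
      ring
    simp only [pow_one]
    rw [e, div_div, ← sq, div_eq_div_iff hsq hcm]
    linear_combination -hkey
  -- now the imaginary-part computation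
  have hterm : ∀ j k : ℕ, Real.sin (θ + (ℓ : ℝ) * ((k : ℝ) + (j : ℝ)) * Real.pi / (m : ℝ))
      = (Complex.exp (θ * Complex.I) * (z ^ k * z ^ j)).im := by
    intro j k
    have h : Complex.exp (θ * Complex.I) * (z ^ k * z ^ j)
        = Complex.exp ((θ + ((k:ℝ) + j) * α : ℝ) * Complex.I) := by
      rw [hzdef, ← Complex.exp_nat_mul, ← Complex.exp_nat_mul, ← Complex.exp_add,
        ← Complex.exp_add]
      congr 1
      push_cast
      ring
    rw [h, Complex.exp_ofReal_mul_I_im]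
    congr 1
    rw [hαdef]
    ring
  calc ∑ j ∈ Finset.Ico 1 m, ∑ k ∈ Finset.Ico 1 j,
        Real.sin (θ + (ℓ : ℝ) * ((k : ℝ) + (j : ℝ)) * Real.pi / (m : ℝ))
      = (∑ j ∈ Finset.Ico 1 m, ∑ k ∈ Finset.Ico 1 j,
          Complex.exp (θ * Complex.I) * (z ^ k * z ^ j)).im := by
        rw [Complex.im_sum]
        refine Finset.sum_congr rfl fun j _ => ?_
        rw [Complex.im_sum]
        exact Finset.sum_congr rfl fun k _ => hterm j k
    _ = (Complex.exp (θ * Complex.I) *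
          ∑ j ∈ Finset.Ico 1 m, (z ^ j * ∑ k ∈ Finset.Ico 1 j, z ^ k)).im := by
        congr 1
        rw [Finset.mul_sum]
        refine Finset.sum_congr rfl fun j _ => ?_
        rw [Finset.mul_sum, Finset.mul_sum]
        exact Finset.sum_congr rfl fun k _ => by ring
    _ = Real.sin θ * (Real.cos α / (Real.cos α - 1)) := by
        rw [hS, Complex.mul_im, Complex.exp_ofReal_mul_I_im, Complex.exp_ofReal_mul_I_re,
          Complex.ofReal_im, Complex.ofReal_re]
        ring
    _ = -Real.sin θ * Real.cos α / (1 - Real.cos α) := by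
        have h3 : Real.cos α - 1 ≠ 0 := sub_ne_zero.mpr hcos1
        have h2 : (1:ℝ) - Real.cos α ≠ 0 := sub_ne_zero.mpr (Ne.symm hcos1)
        rw [show Real.cos α / (Real.cos α - 1) = -Real.cos α / (1 - Real.cos α) from by
          rw [div_eq_div_iff h3 h2]; ring]
        ring
end

section
/- For every integer m ≥ 3, as formal power series, U_m(z) - V_m(z) = z^{2m}/(1 - z^{2m}) + z/(2(1 - z²)), where U_m(z) := z/(1-z) + z³(1 - z^{m-2})(1 - z^{m-1})/((1 - z^{2m})(1-z)(1-z²)) and V_m(z) := z(1 - z^m)/(2(1-z)²(1 + z^m)). -/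
open PowerSeries

/-- `U_m(z) = z/(1-z) + z³(1-z^{m-2})(1-z^{m-1})/((1-z^{2m})(1-z)(1-z²))`
as a formal power series over ℚ. -/
noncomputable def U (m : ℕ) : PowerSeries ℚ :=
  X * (1 - X)⁻¹ +
    X ^ 3 * (1 - X ^ (m - 2)) * (1 - X ^ (m - 1)) *
      ((1 - X ^ (2 * m)) * (1 - X) * (1 - X ^ 2))⁻¹

/-- `V_m(z) = z(1-z^m)/(2(1-z)²(1+z^m))` as a formal power series over ℚ. -/
noncomputable def V (m : ℕ) : PowerSeries ℚ :=
  X * (1 - X ^ m) * (2 * (1 - X) ^ 2 * (1 + X ^ m))⁻¹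

/-- For every `m ≥ 3`, `U_m(z) - V_m(z) = z^{2m}/(1-z^{2m}) + z/(2(1-z²))`. -/
theorem U_sub_V (m : ℕ) (hm : 3 ≤ m) :
    U m - V m = X ^ (2 * m) * (1 - X ^ (2 * m))⁻¹ + X * (2 * (1 - X ^ 2))⁻¹ := by
  obtain ⟨k, rfl⟩ : ∃ k, m = k + 3 := ⟨m - 3, by omega⟩
  have h2 : k + 3 - 2 = k + 1 := by omega
  have h1 : k + 3 - 1 = k + 2 := by omega
  rw [U, V, h2, h1]
  set A : PowerSeries ℚ := 1 - X with hAdef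
  set C : PowerSeries ℚ := 1 - X ^ (2 * (k + 3)) with hCdef
  set B : PowerSeries ℚ := 2 * (1 - X ^ 2) with hBdef
  set G : PowerSeries ℚ := (1 - X ^ (2 * (k + 3))) * (1 - X) * (1 - X ^ 2) with hGdef
  set W : PowerSeries ℚ := 2 * (1 - X) ^ 2 * (1 + X ^ (k + 3)) with hWdef
  have hck : ∀ n : ℕ, n ≠ 0 → constantCoeff (R := ℚ) ((X : PowerSeries ℚ) ^ n) = 0 := by
    intro n hn
    simp [hn]
  have hA : constantCoeff (R := ℚ) A ≠ 0 := by
    simp [hAdef]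
  have hC : constantCoeff (R := ℚ) C ≠ 0 := by
    simp [hCdef, hck (2 * (k + 3)) (by omega)]
  have hB : constantCoeff (R := ℚ) B ≠ 0 := by
    simp [hBdef, hck 2 (by omega), map_ofNat]
  have hG : constantCoeff (R := ℚ) G ≠ 0 := by
    simp [hGdef, hck (2 * (k + 3)) (by omega), hck 2 (by omega)]
  have hW : constantCoeff (R := ℚ) W ≠ 0 := by
    simp [hWdef, hck (k + 3) (by omega), map_ofNat]
  have ha := PowerSeries.inv_mul_cancel A hA
  have hc := PowerSeries.inv_mul_cancel C hC
  have hb := PowerSeries.inv_mul_cancel B hB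
  have hg := PowerSeries.inv_mul_cancel G hG
  have hw := PowerSeries.inv_mul_cancel W hW
  set a := A⁻¹
  set c := C⁻¹
  set b := B⁻¹
  set g := G⁻¹
  set w := W⁻¹
  have hP : (G * W : PowerSeries ℚ) ≠ 0 := by
    intro h
    have := congrArg (constantCoeff (R := ℚ)) h
    rw [map_mul, map_zero] at this
    exact mul_ne_zero hG hW this
  refine mul_right_cancel₀ hP ?_
  have e1 : a * A = 1 := ha
  have e2 : c * C = 1 := hc
  have e3 : b * B = 1 := hb
  have e4 : g * G = 1 := hg
  have e5 : w * W = 1 := hw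
  rw [hAdef] at e1
  rw [hCdef] at e2
  rw [hBdef] at e3
  rw [hGdef] at e4
  rw [hWdef] at e5
  rw [hGdef, hWdef]
  linear_combination
    (X * ((1 - X ^ (2 * (k + 3))) * (1 - X ^ 2) * (2 * (1 - X) ^ 2 * (1 + X ^ (k + 3))))) * e1
    + (X ^ 3 * (1 - X ^ (k + 1)) * (1 - X ^ (k + 2)) * (2 * (1 - X) ^ 2 * (1 + X ^ (k + 3)))) * e4
    - (X * (1 - X ^ (k + 3)) * ((1 - X ^ (2 * (k + 3))) * (1 - X) * (1 - X ^ 2))) * e5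
    - (X ^ (2 * (k + 3)) * ((1 - X) * (1 - X ^ 2) * (2 * (1 - X) ^ 2 * (1 + X ^ (k + 3))))) * e2
    - (X * ((1 - X ^ (2 * (k + 3))) * (1 - X) * (1 - X) ^ 2 * (1 + X ^ (k + 3)))) * e3
end

section
/- For every integer m ≥ 1, the formal power series V_m(z) = z(1 - z^m)/(2(1-z)²(1 + z^m)) has d-th coefficient equal to (m/4)·(1 + (-1)^{⌊d/m⌋}(2{d/m} - 1)) for each d ≥ 1, where {x} denotes the fractional part; in particular all coefficients of V_m are nonnegative. -/
open PowerSeries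

noncomputable def Amk : PowerSeries ℚ := PowerSeries.mk fun n => (n : ℚ) + 1
noncomputable def Cmk (m : ℕ) : PowerSeries ℚ :=
  PowerSeries.mk fun n => if m ∣ n then (-1 : ℚ) ^ (n / m) else 0

lemma ones_mul : ((1 - X : PowerSeries ℚ)) * PowerSeries.mk (fun _ => (1:ℚ)) = 1 := by
  ext n
  rw [sub_mul, one_mul, map_sub]
  cases n with
  | zero => simp
  | succ n => simp [coeff_succ_X_mul]

lemma A_mul : ((1 - X : PowerSeries ℚ)) * Amk = PowerSeries.mk (fun _ => (1:ℚ)) := by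
  ext n
  rw [sub_mul, one_mul, map_sub]
  cases n with
  | zero => simp [Amk]
  | succ n => simp [coeff_succ_X_mul, Amk]

lemma A_sq_mul : ((1 - X : PowerSeries ℚ))^2 * Amk = 1 := by
  rw [sq, mul_assoc, A_mul, ones_mul]

lemma C_mul (m : ℕ) (hm : 1 ≤ m) : ((1 + X ^ m : PowerSeries ℚ)) * Cmk m = 1 := by
  ext n
  rw [add_mul, one_mul, map_add, coeff_X_pow_mul']
  cases n with
  | zero =>
    have : ¬ m ≤ 0 := by omega
    simp [Cmk, this]
  | succ n =>
    rw [coeff_one, if_neg (Nat.succ_ne_zero n)]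
    by_cases hd : m ∣ (n+1)
    · obtain ⟨k, hk⟩ := hd
      have hk1 : 1 ≤ k := by
        rcases Nat.eq_zero_or_pos k with h | h
        · subst h; omega
        · exact h
      have hle : m ≤ n + 1 := by
        calc m = m * 1 := (mul_one m).symm
        _ ≤ m * k := Nat.mul_le_mul_left m hk1
        _ = n + 1 := hk.symm
      have hsub : n + 1 - m = m * (k - 1) := by
        have h2 : m * (k-1) = m*k - m := by
          cases k with
          | zero => omega
          | succ k => simp [Nat.mul_succ]
        omega
      rw [if_pos hle]
      have hd1 : m ∣ n + 1 := ⟨k, hk⟩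
      have hd2 : m ∣ n + 1 - m := ⟨k - 1, hsub⟩
      simp only [Cmk, coeff_mk, if_pos hd1, if_pos hd2]
      rw [hk, hsub] at *
      rw [Nat.mul_div_cancel_left _ (by omega : 0 < m),
        Nat.mul_div_cancel_left _ (by omega : 0 < m)]
      have h3 : (-1:ℚ)^k = -(-1:ℚ)^(k-1) := by
        conv_lhs => rw [show k = (k-1)+1 by omega]
        rw [pow_succ]; ring
      rw [h3]; ring
    · by_cases hle : m ≤ n + 1
      · have hd2 : ¬ m ∣ n + 1 - m := by
          intro h
          exact hd (by have := Nat.dvd_add h (dvd_refl m); rwa [Nat.sub_add_cancel hle] at this)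
        simp only [Cmk, coeff_mk, if_neg hd, if_pos hle, if_neg hd2, add_zero]
      · simp only [Cmk, coeff_mk, if_neg hd, if_neg hle, add_zero]

lemma altsum (c x : ℚ) : ∀ q : ℕ,
    ∑ k ∈ Finset.range (q+1), (-1:ℚ)^k * (x - k*c) =
      if Even q then x - c*q/2 else c*(q+1)/2 := by
  intro q
  induction q with
  | zero => simp
  | succ q ih =>
    rw [Finset.sum_range_succ, ih]
    rcases Nat.even_or_odd q with hq | hq
    · rw [if_pos hq, if_neg (by simp [Nat.even_add_one, hq]), hq.add_one.neg_one_pow]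
      push_cast
      ring
    · rw [if_neg (by simp [Nat.even_add_one, Nat.not_even_iff_odd.mpr hq]),
        if_pos hq.add_one, hq.add_one.neg_one_pow]
      push_cast
      ring

lemma P_eq (m : ℕ) (hm : 1 ≤ m) (n : ℕ) :
    PowerSeries.coeff (R := ℚ) n (Cmk m * Amk) =
      if Even (n/m) then (n:ℚ) + 1 - (m:ℚ)*((n/m : ℕ):ℚ)/2 else (m:ℚ)*(((n/m:ℕ):ℚ)+1)/2 := by
  rw [coeff_mul, Finset.Nat.sum_antidiagonal_eq_sum_range_succ_mk]
  have key : ∑ k ∈ Finset.range (n+1),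
      PowerSeries.coeff (R := ℚ) (k, n-k).1 (Cmk m) * PowerSeries.coeff (R := ℚ) (k, n-k).2 Amk
      = ∑ j ∈ Finset.range (n/m + 1), (-1:ℚ)^j * (((n:ℚ)+1) - j*m) := by
    have e1 : ∀ k, PowerSeries.coeff (R := ℚ) (k, n-k).1 (Cmk m) * PowerSeries.coeff (R := ℚ) (k, n-k).2 Amk
        = if m ∣ k then (-1:ℚ)^(k/m) * ((n-k : ℕ) + 1) else 0 := by
      intro k
      simp only [Cmk, Amk, coeff_mk, ite_mul, zero_mul]
    simp only [e1]
    rw [← Finset.sum_filter]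
    refine Finset.sum_nbij' (fun k => k / m) (fun j => j * m) ?_ ?_ ?_ ?_ ?_
    · intro k hk
      simp only [Finset.mem_filter, Finset.mem_range] at hk ⊢
      have := Nat.div_le_div_right (c := m) (by omega : k ≤ n)
      omega
    · intro j hj
      simp only [Finset.mem_filter, Finset.mem_range] at hj ⊢
      constructor
      · have : j * m ≤ (n/m) * m := Nat.mul_le_mul_right m (by omega)
        have h2 : (n/m) * m ≤ n := by
          rw [mul_comm]; exact Nat.mul_div_le n m
        omega
      · exact dvd_mul_left m j
    · intro k hk
      simp only [Finset.mem_filter] at hk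
      exact Nat.div_mul_cancel hk.2
    · intro j hj
      exact Nat.mul_div_cancel j (by omega : 0 < m)
    · intro k hk
      simp only [Finset.mem_filter, Finset.mem_range] at hk
      have hkn : k ≤ n := by omega
      rw [Nat.cast_sub hkn]
      have hcast : (k:ℚ) = ((k/m : ℕ) : ℚ) * m := by
        rw_mod_cast [Nat.div_mul_cancel hk.2]
      rw [hcast]
      show (-1:ℚ) ^ (k / m) * (↑n - ↑(k / m) * ↑m + 1) = (-1) ^ (k / m) * (↑n + 1 - ↑(k / m) * ↑m)
      ring
  rw [key, altsum]

lemma V_eq (m : ℕ) (hm : 1 ≤ m) :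
    V m = C (R := ℚ) (1/2) * (X * (1 - X^m) * (Cmk m * Amk)) := by
  set D : PowerSeries ℚ := 2 * (1 - X)^2 * (1 + X^m) with hD
  set G : PowerSeries ℚ := C (R := ℚ) (1/2) * (X * (1 - X^m) * (Cmk m * Amk)) with hG
  have h2 : (2 : PowerSeries ℚ) * C (R := ℚ) (1/2) = 1 := by
    have : (2 : PowerSeries ℚ) = C (R := ℚ) 2 := (map_ofNat (C (R := ℚ)) 2).symm
    rw [this, ← map_mul]
    norm_num
  have hDG : D * G = X * (1 - X^m) := by
    calc D * G = ((2 : PowerSeries ℚ) * C (R := ℚ) (1/2)) *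
        (((1-X)^2 * Amk) * ((1+X^m) * Cmk m) * (X * (1 - X^m))) := by
          rw [hD, hG]; ring
    _ = X * (1 - X^m) := by rw [A_sq_mul, C_mul m hm, h2]; ring
  have hc : constantCoeff (R := ℚ) D ≠ 0 := by
    have hX : constantCoeff (R := ℚ) (X : PowerSeries ℚ) = 0 := constantCoeff_X
    have hXm : constantCoeff (R := ℚ) ((X : PowerSeries ℚ)^m) = 0 := by
      rw [map_pow, hX, zero_pow (by omega)]
    rw [hD]
    simp only [map_mul, map_pow, map_sub, map_add, map_one, hX, hXm, map_ofNat]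
    norm_num
  have hdd : D * D⁻¹ = 1 := PowerSeries.mul_inv_cancel D hc
  calc V m = (D * G) * D⁻¹ := by rw [hDG, V]
  _ = G * (D * D⁻¹) := by ring
  _ = G := by rw [hdd, mul_one]

lemma V_coeff_aux (m : ℕ) (hm : 1 ≤ m) (d : ℕ) :
    PowerSeries.coeff (R := ℚ) d (V m) = 1/2 *
      ((if 1 ≤ d then PowerSeries.coeff (R := ℚ) (d-1) (Cmk m * Amk) else 0)
       - (if m+1 ≤ d then PowerSeries.coeff (R := ℚ) (d-(m+1)) (Cmk m * Amk) else 0)) := by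
  rw [V_eq m hm]
  have : (X * (1 - X^m) * (Cmk m * Amk) : PowerSeries ℚ)
      = X^1 * (Cmk m * Amk) - X^(m+1) * (Cmk m * Amk) := by ring
  rw [coeff_C_mul, this, map_sub, coeff_X_pow_mul', coeff_X_pow_mul']

lemma main_formula (m : ℕ) (hm : 1 ≤ m) (d : ℕ) (hd : 1 ≤ d) :
    PowerSeries.coeff (R := ℚ) d (V m) =
      if Even (d/m) then ((d % m : ℕ):ℚ)/2 else ((m:ℚ) - ((d % m : ℕ):ℚ))/2 := by
  have hdiv : ∀ a b : ℕ, b < m → (m * a + b) / m = a := by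
    intro a b hb
    rw [Nat.mul_add_div (by omega), Nat.div_eq_of_lt hb, add_zero]
  rw [V_coeff_aux m hm d, if_pos hd]
  have hdr0 : m * (d / m) + d % m = d := Nat.div_add_mod d m
  have hrm0 : d % m < m := Nat.mod_lt d (by omega)
  obtain ⟨Q, hQeq⟩ : ∃ Q, d / m = Q := ⟨_, rfl⟩
  obtain ⟨r, hreq⟩ : ∃ r, d % m = r := ⟨_, rfl⟩
  simp only [hQeq, hreq] at hdr0 hrm0 ⊢
  have hdr := hdr0
  have hrm := hrm0
  have hdQ : (d:ℚ) = (m:ℚ) * Q + r := by exact_mod_cast congrArg (Nat.cast (R := ℚ)) hdr.symm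
  by_cases hr1 : 1 ≤ r
  · have h1 : (d-1)/m = Q := by
      rw [show d - 1 = m * Q + (r - 1) by omega]; exact hdiv Q (r-1) (by omega)
    have hxc : ((d - 1 : ℕ) : ℚ) = (d:ℚ) - 1 := by
      rw [Nat.cast_sub hd]; norm_num
    by_cases hQ1 : 1 ≤ Q
    · have hmQ : m * 1 ≤ m * Q := Nat.mul_le_mul_left m hQ1
      have hguard : m + 1 ≤ d := by omega
      have h2 : (d-(m+1))/m = Q - 1 := by
        rw [show d - (m+1) = m * (Q - 1) + (r - 1) by
          have : m * (Q - 1) + m = m * Q := by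
            rw [← Nat.mul_succ]; congr 1; omega
          omega]
        exact hdiv (Q-1) (r-1) (by omega)
      have hyc : ((d - (m+1) : ℕ) : ℚ) = (d:ℚ) - (m+1) := by
        rw [Nat.cast_sub hguard]; push_cast; ring
      rw [if_pos hguard, P_eq m hm, P_eq m hm, h1, h2]
      obtain ⟨Q', rfl⟩ : ∃ Q', Q = Q' + 1 := ⟨Q - 1, by omega⟩
      have hQ'c : ((Q' + 1 - 1 : ℕ) : ℚ) = (Q' : ℚ) := by norm_num
      rcases Nat.even_or_odd (Q' + 1) with he | he
      · have h3 : ¬ Even (Q' + 1 - 1) := by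
          rw [Nat.even_iff] at *; omega
        rw [if_pos he, if_neg h3, if_pos he]
        simp only [hxc, hyc, hQ'c]
        push_cast at hdQ ⊢
        linear_combination hdQ / 2
      · have h3 : Even (Q' + 1 - 1) := by
          rw [Nat.even_iff] at *; rw [Nat.odd_iff] at he; omega
        rw [if_neg (Nat.not_even_iff_odd.mpr he), if_pos h3,
          if_neg (Nat.not_even_iff_odd.mpr he)]
        simp only [hxc, hyc, hQ'c]
        push_cast at hdQ ⊢
        linear_combination -hdQ / 2
    · -- Q = 0, so d = r < m
      have hQ0 : Q = 0 := by omega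
      subst hQ0
      rw [mul_zero, zero_add] at hdr
      have hguard : ¬ (m + 1 ≤ d) := by omega
      rw [if_neg hguard, P_eq m hm, h1]
      rw [if_pos (Even.zero), if_pos (Even.zero), hxc]
      push_cast
      rw [hdQ]
      push_cast
      ring
  · -- r = 0, d = m * Q, Q ≥ 1
    have hr0 : r = 0 := by omega
    have hQ1 : 1 ≤ Q := by
      by_contra h
      have h0 : Q = 0 := by omega
      rw [h0, mul_zero, zero_add] at hdr
      omega
    have h1 : (d-1)/m = Q - 1 := by
      rw [show d - 1 = m * (Q - 1) + (m - 1) by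
        have : m * (Q - 1) + m = m * Q := by
          rw [← Nat.mul_succ]; congr 1; omega
        omega]
      exact hdiv (Q-1) (m-1) (by omega)
    have hxc : ((d - 1 : ℕ) : ℚ) = (d:ℚ) - 1 := by
      rw [Nat.cast_sub hd]; norm_num
    by_cases hQ2 : 2 ≤ Q
    · have hmQ : m * 2 ≤ m * Q := Nat.mul_le_mul_left m hQ2
      have hguard : m + 1 ≤ d := by omega
      have h2 : (d-(m+1))/m = Q - 2 := by
        rw [show d - (m+1) = m * (Q - 2) + (m - 1) by
          have : m * (Q - 2) + m + m = m * Q := by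
            rw [← Nat.mul_succ, ← Nat.mul_succ]; congr 1; omega
          omega]
        exact hdiv (Q-2) (m-1) (by omega)
      have hyc : ((d - (m+1) : ℕ) : ℚ) = (d:ℚ) - (m+1) := by
        rw [Nat.cast_sub hguard]; push_cast; ring
      rw [if_pos hguard, P_eq m hm, P_eq m hm, h1, h2]
      obtain ⟨Q', rfl⟩ : ∃ Q', Q = Q' + 2 := ⟨Q - 2, by omega⟩
      have hc1 : ((Q' + 2 - 1 : ℕ) : ℚ) = (Q' : ℚ) + 1 := by norm_num
      have hc2 : ((Q' + 2 - 2 : ℕ) : ℚ) = (Q' : ℚ) := by norm_num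
      rcases Nat.even_or_odd (Q' + 2) with he | he
      · have h3 : ¬ Even (Q' + 2 - 1) := by rw [Nat.even_iff] at *; omega
        have h4 : Even (Q' + 2 - 2) := by rw [Nat.even_iff] at *; omega
        rw [if_pos he, if_neg h3, if_pos h4]
        simp only [hxc, hyc, hc1, hc2, hr0]
        rw [hr0] at hdQ
        push_cast at hdQ ⊢
        linear_combination -hdQ / 2
      · have h3 : Even (Q' + 2 - 1) := by
          rw [Nat.even_iff] at *; rw [Nat.odd_iff] at he; omega
        have h4 : ¬ Even (Q' + 2 - 2) := by
          rw [Nat.even_iff] at *; rw [Nat.odd_iff] at he; omega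
        rw [if_neg (Nat.not_even_iff_odd.mpr he), if_pos h3, if_neg h4]
        simp only [hxc, hyc, hc1, hc2, hr0]
        rw [hr0] at hdQ
        push_cast at hdQ ⊢
        linear_combination hdQ / 2
    · -- Q = 1, d = m
      have hQ1' : Q = 1 := by omega
      rw [hQ1', mul_one] at hdr
      have hdm : d = m := by omega
      have hguard : ¬ (m + 1 ≤ d) := by omega
      rw [if_neg hguard, P_eq m hm, h1, hQ1']
      norm_num
      rw [hxc, hr0, hdm]
      push_cast
      ring

/-- For `m ≥ 1`, the `d`-th coefficient of `V_m` equals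
`(m/4)(1 + (-1)^{⌊d/m⌋}(2{d/m} - 1))` for `d ≥ 1`; in particular all coefficients
of `V_m` are nonnegative. -/
theorem V_coeff (m : ℕ) (hm : 1 ≤ m) :
    (∀ d : ℕ, 1 ≤ d →
      PowerSeries.coeff (R := ℚ) d (V m) =
        (m : ℚ) / 4 * (1 + (-1) ^ (d / m) * (2 * (((d % m : ℕ) : ℚ) / (m : ℚ)) - 1))) ∧
    (∀ d : ℕ, 0 ≤ PowerSeries.coeff (R := ℚ) d (V m)) := by
  have hm0 : (m:ℚ) ≠ 0 := Nat.cast_ne_zero.mpr (by omega)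
  constructor
  · intro d hd
    rw [main_formula m hm d hd]
    rcases Nat.even_or_odd (d/m) with he | he
    · rw [if_pos he, he.neg_one_pow]
      field_simp
      ring
    · rw [if_neg (Nat.not_even_iff_odd.mpr he), he.neg_one_pow]
      field_simp
      ring
  · intro d
    rcases Nat.eq_zero_or_pos d with rfl | hd
    · rw [V_coeff_aux m hm 0]
      norm_num
    · rw [main_formula m hm d hd]
      have h1 : d % m < m := Nat.mod_lt d (by omega)
      have h2 : ((d % m : ℕ) : ℚ) ≤ (m : ℚ) := by exact_mod_cast h1.le
      split_ifs
      · positivity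
      · have : (0:ℚ) ≤ (m:ℚ) - ((d % m : ℕ) : ℚ) := by linarith
        linarith
end

section
/- Let G_m(z) = Π_{k ≥ 1}(1-z^k)^{-1} · Π_{k ≥ 0} Π_{1 ≤ h < j < m} (1 - z^{2mk+h+j})^{-1} with coefficients G_{n,m} = [z^n]G_m(z). Then log G_m(z) = Σ_{ℓ ≥ 1} U_m(z^ℓ)/ℓ as formal power series, where U_m(z) := z/(1-z) + z³(1 - z^{m-2})(1 - z^{m-1})/((1 - z^{2m})(1-z)(1-z²)). -/
open PowerSeries

namespace LogGAux

open Finset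

noncomputable def g (a : ℕ) : PowerSeries ℚ := PowerSeries.mk fun n => if a ∣ n then 1 else 0

lemma one_sub_mul_g (a : ℕ) (ha : 0 < a) : ((1 : ℚ⟦X⟧) - X ^ a) * g a = 1 := by
  ext n
  rw [sub_mul, one_mul, map_sub, PowerSeries.coeff_X_pow_mul']
  simp only [g, coeff_mk, PowerSeries.coeff_one]
  by_cases h : a ≤ n
  · have hd : a ∣ n ↔ a ∣ n - a := by
      constructor
      · intro hh; exact Nat.dvd_sub hh dvd_rfl
      · intro hh
        have : n - a + a = n := Nat.sub_add_cancel h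
        exact this ▸ hh.add dvd_rfl
    have hn0 : n ≠ 0 := by omega
    rw [if_pos h]
    by_cases hd1 : a ∣ n
    · rw [if_pos hd1, if_pos (hd.mp hd1), if_neg hn0]; ring
    · rw [if_neg hd1, if_neg (fun hh => hd1 (hd.mpr hh)), if_neg hn0]; ring
  · rw [if_neg h]
    by_cases hn0 : n = 0
    · subst hn0; simp
    · rw [if_neg hn0, if_neg (fun hh => h (Nat.le_of_dvd (by omega) hh)), sub_zero]

lemma const_one_sub (a : ℕ) (ha : 0 < a) : constantCoeff ((1 : ℚ⟦X⟧) - X ^ a) = 1 := by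
  simp [zero_pow ha.ne']

lemma g_inv (a : ℕ) (ha : 0 < a) : ((1 : ℚ⟦X⟧) - X ^ a)⁻¹ = g a := by
  rw [PowerSeries.inv_eq_iff_mul_eq_one (by rw [const_one_sub a ha]; norm_num)]
  rw [mul_comm]; exact one_sub_mul_g a ha

lemma coeff_pow_mul_g (b c n : ℕ) :
    PowerSeries.coeff n (X ^ b * g c) = if b ≤ n ∧ c ∣ (n - b) then 1 else 0 := by
  rw [PowerSeries.coeff_X_pow_mul']
  simp only [g, coeff_mk]
  by_cases h : b ≤ n
  · by_cases h2 : c ∣ n - b <;> simp [h, h2]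
  · simp [h]

lemma inner_sum (Y : ℚ⟦X⟧) (c : ℕ) : ∀ j : ℕ, 1 ≤ j →
    (∑ h ∈ Ico 1 j, Y ^ (h + c)) * (1 - Y) = Y ^ (1 + c) - Y ^ (j + c) := by
  intro j hj
  induction j, hj using Nat.le_induction with
  | base => simp
  | succ j hj ih =>
    rw [Finset.sum_Ico_succ_top hj, add_mul, ih]
    have : Y ^ (j + 1 + c) = Y ^ (j + c) * Y := by ring
    rw [this]; ring

lemma sumT (Y : ℚ⟦X⟧) (t : ℕ) :
    (∑ j ∈ Ico 1 (t + 3), ∑ h ∈ Ico 1 j, Y ^ (h + j)) * ((1 - Y) * (1 - Y ^ 2)) =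
      Y ^ 3 * (1 - Y ^ (t + 1)) * (1 - Y ^ (t + 2)) := by
  induction t with
  | zero =>
    have e : Finset.Ico 1 3 = {1, 2} := rfl
    rw [e]
    rw [Finset.sum_insert (by decide), Finset.sum_singleton]
    have e1 : Finset.Ico 1 1 = (∅ : Finset ℕ) := rfl
    have e2 : Finset.Ico 1 2 = ({1} : Finset ℕ) := rfl
    rw [e1, e2, Finset.sum_empty, Finset.sum_singleton]
    ring
  | succ t ih =>
    have e : t + 1 + 3 = (t + 3) + 1 := by omega
    rw [e, Finset.sum_Ico_succ_top (by omega), add_mul]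
    have h2 := inner_sum Y (t + 3) (t + 3) (by omega)
    have e2 : (∑ h ∈ Ico 1 (t + 3), Y ^ (h + (t + 3))) * ((1 - Y) * (1 - Y ^ 2)) =
        (Y ^ (1 + (t + 3)) - Y ^ ((t + 3) + (t + 3))) * (1 - Y ^ 2) := by
      rw [← h2]; ring
    rw [ih, e2]
    ring

end LogGAux

/-- `U_m(z^ℓ)`, i.e. the rational expression defining
`U_m(z) = z/(1-z) + z³(1-z^{m-2})(1-z^{m-1})/((1-z^{2m})(1-z)(1-z²))`
with `z` replaced by `z^ℓ`, as a formal power series over ℚ. -/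
noncomputable def Usub (m ℓ : ℕ) : PowerSeries ℚ :=
  X ^ ℓ * (1 - X ^ ℓ)⁻¹ +
    X ^ (3 * ℓ) * (1 - X ^ ((m - 2) * ℓ)) * (1 - X ^ ((m - 1) * ℓ)) *
      ((1 - X ^ (2 * m * ℓ)) * (1 - X ^ ℓ) * (1 - X ^ (2 * ℓ)))⁻¹

/-- `log(1/(1 - z^a)) = Σ_{ℓ ≥ 1} z^{aℓ}/ℓ` as a formal power series over ℚ. -/
noncomputable def logGeom (a : ℕ) : PowerSeries ℚ :=
  PowerSeries.mk fun n => if a ∣ n ∧ 0 < n then ((n / a : ℕ) : ℚ)⁻¹ else 0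

/-- `log G_m(z)` where `G_m(z) = Π_{k≥1}(1-z^k)^{-1} · Π_{k≥0}Π_{1≤h<j<m}(1-z^{2mk+h+j})^{-1}`,
the logarithm being taken factorwise via `log(1/(1-z^a)) = Σ_{ℓ≥1} z^{aℓ}/ℓ`.
(Each coefficient receives only finitely many nonzero contributions, reflected in the
truncated ranges below: `logGeom k` has zero `n`-th coefficient for `k > n`.) -/
noncomputable def logG (m : ℕ) : PowerSeries ℚ :=
  PowerSeries.mk fun n =>
    (∑ k ∈ Finset.Icc 1 n, PowerSeries.coeff n (logGeom k)) +
    ∑ k ∈ Finset.range (n + 1), ∑ j ∈ Finset.Ico 1 m, ∑ h ∈ Finset.Ico 1 j,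
      PowerSeries.coeff n (logGeom (2 * m * k + h + j))

namespace LogGAux

open Finset

lemma usub_eq (m ℓ : ℕ) (hm : 3 ≤ m) (hl : 0 < ℓ) :
    Usub m ℓ = X ^ ℓ * g ℓ +
      (∑ j ∈ Ico 1 m, ∑ h ∈ Ico 1 j, (X : ℚ⟦X⟧) ^ ((h + j) * ℓ)) * g (2 * m * ℓ) := by
  obtain ⟨t, rfl⟩ : ∃ t, m = t + 3 := ⟨m - 3, by omega⟩
  set T : ℚ⟦X⟧ := ∑ j ∈ Ico 1 (t + 3), ∑ h ∈ Ico 1 j, (X : ℚ⟦X⟧) ^ ((h + j) * ℓ) with hT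
  have hpow : ∀ k : ℕ, (X : ℚ⟦X⟧) ^ (k * ℓ) = (X ^ ℓ) ^ k := fun k => by
    rw [mul_comm, pow_mul]
  have hN : (X : ℚ⟦X⟧) ^ (3 * ℓ) * (1 - X ^ ((t + 3 - 2) * ℓ)) * (1 - X ^ ((t + 3 - 1) * ℓ)) =
      T * ((1 - X ^ ℓ) * (1 - X ^ (2 * ℓ))) := by
    have e1 : t + 3 - 2 = t + 1 := by omega
    have e2 : t + 3 - 1 = t + 2 := by omega
    rw [e1, e2, hT]
    simp only [hpow]
    have := sumT ((X : ℚ⟦X⟧) ^ ℓ) t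
    rw [← this]
  have hconst : constantCoeff (((1 : ℚ⟦X⟧) - X ^ (2 * (t + 3) * ℓ)) * (1 - X ^ ℓ) *
      (1 - X ^ (2 * ℓ))) ≠ 0 := by
    rw [map_mul, map_mul, const_one_sub _ (by positivity), const_one_sub _ hl,
      const_one_sub _ (by positivity)]
    norm_num
  have hA : (((1 : ℚ⟦X⟧) - X ^ (2 * (t + 3) * ℓ)) * (1 - X ^ ℓ) * (1 - X ^ (2 * ℓ)))⁻¹ =
      g (2 * (t + 3) * ℓ) * g ℓ * g (2 * ℓ) := by
    rw [PowerSeries.inv_eq_iff_mul_eq_one hconst]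
    have h1 := one_sub_mul_g (2 * (t + 3) * ℓ) (by positivity)
    have h2 := one_sub_mul_g ℓ hl
    have h3 := one_sub_mul_g (2 * ℓ) (by positivity)
    calc g (2 * (t + 3) * ℓ) * g ℓ * g (2 * ℓ) *
          (((1 : ℚ⟦X⟧) - X ^ (2 * (t + 3) * ℓ)) * (1 - X ^ ℓ) * (1 - X ^ (2 * ℓ)))
        = (((1 : ℚ⟦X⟧) - X ^ (2 * (t + 3) * ℓ)) * g (2 * (t + 3) * ℓ)) *
          (((1 : ℚ⟦X⟧) - X ^ ℓ) * g ℓ) * (((1 : ℚ⟦X⟧) - X ^ (2 * ℓ)) * g (2 * ℓ)) := by ring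
      _ = 1 := by rw [h1, h2, h3, mul_one, mul_one]
  rw [Usub, g_inv ℓ hl, hA]
  have h2 := one_sub_mul_g ℓ hl
  have h3 := one_sub_mul_g (2 * ℓ) (by positivity)
  congr 1
  linear_combination (g (2 * (t + 3) * ℓ) * g ℓ * g (2 * ℓ)) * hN +
    (T * g (2 * (t + 3) * ℓ) * ((1 : ℚ⟦X⟧) - X ^ ℓ) * g ℓ) * h3 +
    (T * g (2 * (t + 3) * ℓ)) * h2

lemma coeff_usub (m ℓ n : ℕ) (hm : 3 ≤ m) (hl : 0 < ℓ) :
    PowerSeries.coeff n (Usub m ℓ) =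
      (if ℓ ≤ n ∧ ℓ ∣ n - ℓ then 1 else 0) +
      ∑ j ∈ Ico 1 m, ∑ h ∈ Ico 1 j,
        (if (h + j) * ℓ ≤ n ∧ 2 * m * ℓ ∣ n - (h + j) * ℓ then 1 else 0) := by
  rw [usub_eq m ℓ hm hl, map_add, coeff_pow_mul_g]
  congr 1
  rw [Finset.sum_mul, map_sum]
  refine Finset.sum_congr rfl fun j _ => ?_
  rw [Finset.sum_mul, map_sum]
  exact Finset.sum_congr rfl fun h _ => coeff_pow_mul_g _ _ _

lemma dvd_sub_iff (a n : ℕ) (h : a ≤ n) : a ∣ n ↔ a ∣ n - a := by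
  constructor
  · intro hh; exact Nat.dvd_sub hh dvd_rfl
  · intro hh
    have e : n - a + a = n := Nat.sub_add_cancel h
    exact e ▸ hh.add dvd_rfl

lemma part1 (n : ℕ) (hn : 0 < n) :
    (∑ k ∈ Icc 1 n, if k ∣ n ∧ 0 < n then ((n / k : ℕ) : ℚ)⁻¹ else 0) =
      ∑ ℓ ∈ Icc 1 n, (ℓ : ℚ)⁻¹ * (if ℓ ≤ n ∧ ℓ ∣ n - ℓ then 1 else 0) := by
  have hIcc : Finset.Icc 1 n = Finset.Ico 1 (n + 1) := by rw [Finset.Ico_add_one_right_eq_Icc]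
  have hdiv : n.divisors = Finset.filter (· ∣ n) (Finset.Ico 1 (n + 1)) := rfl
  calc (∑ k ∈ Icc 1 n, if k ∣ n ∧ 0 < n then ((n / k : ℕ) : ℚ)⁻¹ else 0)
      = ∑ k ∈ Ico 1 (n + 1), (if k ∣ n then ((n / k : ℕ) : ℚ)⁻¹ else 0) := by
        rw [← hIcc]; exact Finset.sum_congr rfl fun k _ => by simp [hn]
    _ = ∑ k ∈ n.divisors, ((n / k : ℕ) : ℚ)⁻¹ := by rw [hdiv, Finset.sum_filter]
    _ = ∑ d ∈ n.divisors, ((d : ℕ) : ℚ)⁻¹ :=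
        Nat.sum_div_divisors n (fun d => ((d : ℕ) : ℚ)⁻¹)
    _ = ∑ ℓ ∈ Ico 1 (n + 1), (if ℓ ∣ n then ((ℓ : ℕ) : ℚ)⁻¹ else 0) := by
        rw [hdiv, Finset.sum_filter]
    _ = ∑ ℓ ∈ Icc 1 n, (ℓ : ℚ)⁻¹ * (if ℓ ≤ n ∧ ℓ ∣ n - ℓ then 1 else 0) := by
        rw [← hIcc]
        refine Finset.sum_congr rfl fun ℓ hℓ => ?_
        rw [Finset.mem_Icc] at hℓ
        have hle : ℓ ≤ n := hℓ.2
        by_cases hd : ℓ ∣ n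
        · rw [if_pos hd, if_pos ⟨hle, (dvd_sub_iff ℓ n hle).mp hd⟩, mul_one]
        · rw [if_neg hd, if_neg (fun hc => hd ((dvd_sub_iff ℓ n hle).mpr hc.2)), mul_zero]

lemma key (m n a : ℕ) (hm : 3 ≤ m) (hn : 0 < n) :
    (∑ k ∈ range (n + 1),
        if (2 * m * k + a) ∣ n ∧ 0 < n then ((n / (2 * m * k + a) : ℕ) : ℚ)⁻¹ else 0) =
      ∑ ℓ ∈ Icc 1 n, (ℓ : ℚ)⁻¹ * (if a * ℓ ≤ n ∧ 2 * m * ℓ ∣ n - a * ℓ then 1 else 0) := by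
  have hIcc : Finset.Icc 1 n = Finset.Ico 1 (n + 1) := by rw [Finset.Ico_add_one_right_eq_Icc]
  have hdiv : n.divisors = Finset.filter (· ∣ n) (Finset.Ico 1 (n + 1)) := rfl
  have hm0 : 0 < 2 * m := by omega
  have hL : (∑ k ∈ range (n + 1),
        if (2 * m * k + a) ∣ n ∧ 0 < n then ((n / (2 * m * k + a) : ℕ) : ℚ)⁻¹ else 0) =
      ∑ d ∈ n.divisors, (if a ≤ d ∧ 2 * m ∣ d - a then ((n / d : ℕ) : ℚ)⁻¹ else 0) := by
    calc (∑ k ∈ range (n + 1),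
          if (2 * m * k + a) ∣ n ∧ 0 < n then ((n / (2 * m * k + a) : ℕ) : ℚ)⁻¹ else 0)
        = ∑ k ∈ (range (n + 1)).filter (fun k => (2 * m * k + a) ∣ n),
            ((n / (2 * m * k + a) : ℕ) : ℚ)⁻¹ := by
          rw [Finset.sum_filter]
          exact Finset.sum_congr rfl fun k _ => by simp [hn]
      _ = ∑ d ∈ n.divisors.filter (fun d => a ≤ d ∧ 2 * m ∣ d - a),
            ((n / d : ℕ) : ℚ)⁻¹ := by
          refine Finset.sum_nbij' (fun k => 2 * m * k + a) (fun d => (d - a) / (2 * m))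
            ?_ ?_ ?_ ?_ ?_
          · intro k hk
            simp only [Finset.mem_filter, Finset.mem_range] at hk
            simp only [Finset.mem_filter, Nat.mem_divisors]
            refine ⟨⟨hk.2, hn.ne'⟩, Nat.le_add_left a _, ?_⟩
            rw [Nat.add_sub_cancel]
            exact ⟨k, rfl⟩
          · intro d hd
            simp only [Finset.mem_filter, Nat.mem_divisors] at hd
            obtain ⟨⟨hdvd, -⟩, had, hmod⟩ := hd
            have hdn : d ≤ n := Nat.le_of_dvd hn hdvd
            have he : 2 * m * ((d - a) / (2 * m)) = d - a := Nat.mul_div_cancel' hmod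
            simp only [Finset.mem_filter, Finset.mem_range]
            constructor
            · exact Nat.lt_succ_of_le (le_trans (Nat.div_le_self _ _)
                (le_trans (Nat.sub_le d a) hdn))
            · have e2 : 2 * m * ((d - a) / (2 * m)) + a = d := by rw [he]; omega
              rw [e2]; exact hdvd
          · intro k _
            rw [Nat.add_sub_cancel, Nat.mul_div_cancel_left k hm0]
          · intro d hd
            simp only [Finset.mem_filter, Nat.mem_divisors] at hd
            obtain ⟨⟨hdvd, -⟩, had, hmod⟩ := hd
            have he : 2 * m * ((d - a) / (2 * m)) = d - a := Nat.mul_div_cancel' hmod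
            rw [he]; omega
          · intro k _; rfl
      _ = ∑ d ∈ n.divisors, (if a ≤ d ∧ 2 * m ∣ d - a then ((n / d : ℕ) : ℚ)⁻¹ else 0) :=
          Finset.sum_filter _ _
  rw [hL,
    ← Nat.sum_div_divisors n (fun d => if a ≤ d ∧ 2 * m ∣ d - a then ((n / d : ℕ) : ℚ)⁻¹ else 0)]
  calc (∑ d ∈ n.divisors,
        if a ≤ n / d ∧ 2 * m ∣ n / d - a then ((n / (n / d) : ℕ) : ℚ)⁻¹ else 0)
      = ∑ ℓ ∈ Ico 1 (n + 1),
          (if ℓ ∣ n then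
            (if a ≤ n / ℓ ∧ 2 * m ∣ n / ℓ - a then ((n / (n / ℓ) : ℕ) : ℚ)⁻¹ else 0) else 0) := by
        rw [hdiv, Finset.sum_filter]
    _ = ∑ ℓ ∈ Icc 1 n, (ℓ : ℚ)⁻¹ * (if a * ℓ ≤ n ∧ 2 * m * ℓ ∣ n - a * ℓ then 1 else 0) := by
        rw [← hIcc]
        refine Finset.sum_congr rfl fun ℓ hℓ => ?_
        rw [Finset.mem_Icc] at hℓ
        have hl0 : 0 < ℓ := hℓ.1
        by_cases hdvd : ℓ ∣ n
        · rw [if_pos hdvd]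
          have hnd : n = n / ℓ * ℓ := (Nat.div_mul_cancel hdvd).symm
          have h1 : a * ℓ ≤ n ↔ a ≤ n / ℓ := by
            nth_rewrite 1 [hnd]
            exact ⟨fun h => Nat.le_of_mul_le_mul_right h hl0,
              fun h => Nat.mul_le_mul_right ℓ h⟩
          have h2 : 2 * m * ℓ ∣ n - a * ℓ ↔ 2 * m ∣ n / ℓ - a := by
            nth_rewrite 1 [hnd]
            rw [← Nat.sub_mul]
            exact mul_dvd_mul_iff_right (a := 2 * m) (b := n / ℓ - a) (c := ℓ) hl0.ne'
          have h3 : ((n / (n / ℓ) : ℕ) : ℚ)⁻¹ = (ℓ : ℚ)⁻¹ := by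
            rw [Nat.div_div_self hdvd hn.ne']
          by_cases hc : a ≤ n / ℓ ∧ 2 * m ∣ n / ℓ - a
          · rw [if_pos hc, if_pos ⟨h1.mpr hc.1, h2.mpr hc.2⟩, mul_one, h3]
          · rw [if_neg hc, if_neg (fun hcc => hc ⟨h1.mp hcc.1, h2.mp hcc.2⟩), mul_zero]
        · rw [if_neg hdvd]
          have hne : ¬ (a * ℓ ≤ n ∧ 2 * m * ℓ ∣ n - a * ℓ) := by
            intro hcc
            apply hdvd
            have h1 : ℓ ∣ n - a * ℓ := dvd_trans ⟨2 * m, by ring⟩ hcc.2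
            have h2 : n - a * ℓ + a * ℓ = n := Nat.sub_add_cancel hcc.1
            exact h2 ▸ h1.add ⟨a, mul_comm a ℓ⟩
          rw [if_neg hne, mul_zero]

lemma part2 (m n : ℕ) (hm : 3 ≤ m) (hn : 0 < n) :
    (∑ k ∈ range (n + 1), ∑ j ∈ Ico 1 m, ∑ h ∈ Ico 1 j,
        if (2 * m * k + h + j) ∣ n ∧ 0 < n then ((n / (2 * m * k + h + j) : ℕ) : ℚ)⁻¹ else 0) =
      ∑ ℓ ∈ Icc 1 n, (ℓ : ℚ)⁻¹ * ∑ j ∈ Ico 1 m, ∑ h ∈ Ico 1 j,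
        (if (h + j) * ℓ ≤ n ∧ 2 * m * ℓ ∣ n - (h + j) * ℓ then 1 else 0) := by
  calc (∑ k ∈ range (n + 1), ∑ j ∈ Ico 1 m, ∑ h ∈ Ico 1 j,
        if (2 * m * k + h + j) ∣ n ∧ 0 < n then ((n / (2 * m * k + h + j) : ℕ) : ℚ)⁻¹ else 0)
      = ∑ j ∈ Ico 1 m, ∑ h ∈ Ico 1 j, ∑ k ∈ range (n + 1),
        (if (2 * m * k + h + j) ∣ n ∧ 0 < n
          then ((n / (2 * m * k + h + j) : ℕ) : ℚ)⁻¹ else 0) := by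
        rw [Finset.sum_comm]
        exact Finset.sum_congr rfl fun j _ => Finset.sum_comm
    _ = ∑ j ∈ Ico 1 m, ∑ h ∈ Ico 1 j, ∑ ℓ ∈ Icc 1 n, (ℓ : ℚ)⁻¹ *
        (if (h + j) * ℓ ≤ n ∧ 2 * m * ℓ ∣ n - (h + j) * ℓ then 1 else 0) := by
        refine Finset.sum_congr rfl fun j _ => Finset.sum_congr rfl fun h _ => ?_
        have := key m n (h + j) hm hn
        simpa only [add_assoc] using this
    _ = ∑ ℓ ∈ Icc 1 n, (ℓ : ℚ)⁻¹ * ∑ j ∈ Ico 1 m, ∑ h ∈ Ico 1 j,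
        (if (h + j) * ℓ ≤ n ∧ 2 * m * ℓ ∣ n - (h + j) * ℓ then 1 else 0) := by
        symm
        calc (∑ ℓ ∈ Icc 1 n, (ℓ : ℚ)⁻¹ * ∑ j ∈ Ico 1 m, ∑ h ∈ Ico 1 j,
              (if (h + j) * ℓ ≤ n ∧ 2 * m * ℓ ∣ n - (h + j) * ℓ then 1 else 0))
            = ∑ ℓ ∈ Icc 1 n, ∑ j ∈ Ico 1 m, ∑ h ∈ Ico 1 j, (ℓ : ℚ)⁻¹ *
              (if (h + j) * ℓ ≤ n ∧ 2 * m * ℓ ∣ n - (h + j) * ℓ then 1 else 0) := by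
              refine Finset.sum_congr rfl fun ℓ _ => ?_
              rw [Finset.mul_sum]
              exact Finset.sum_congr rfl fun j _ => Finset.mul_sum _ _ _
          _ = ∑ j ∈ Ico 1 m, ∑ ℓ ∈ Icc 1 n, ∑ h ∈ Ico 1 j, (ℓ : ℚ)⁻¹ *
              (if (h + j) * ℓ ≤ n ∧ 2 * m * ℓ ∣ n - (h + j) * ℓ then 1 else 0) :=
              Finset.sum_comm
          _ = ∑ j ∈ Ico 1 m, ∑ h ∈ Ico 1 j, ∑ ℓ ∈ Icc 1 n, (ℓ : ℚ)⁻¹ *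
              (if (h + j) * ℓ ≤ n ∧ 2 * m * ℓ ∣ n - (h + j) * ℓ then 1 else 0) :=
              Finset.sum_congr rfl fun j _ => Finset.sum_comm

end LogGAux

/-- For `m ≥ 3`, `log G_m(z) = Σ_{ℓ ≥ 1} U_m(z^ℓ)/ℓ` as formal power series
(the right-hand side written coefficientwise; `Usub m ℓ` has zero `n`-th coefficient
for `ℓ > n`). -/
theorem logG_eq (m : ℕ) (hm : 3 ≤ m) :
    logG m = PowerSeries.mk fun n =>
      ∑ ℓ ∈ Finset.Icc 1 n, (ℓ : ℚ)⁻¹ * PowerSeries.coeff n (Usub m ℓ) := by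
  apply PowerSeries.ext
  intro n
  rw [logG, PowerSeries.coeff_mk, PowerSeries.coeff_mk]
  rcases Nat.eq_zero_or_pos n with h0 | hn
  · subst h0
    simp [logGeom]
  · have hcu : ∀ ℓ ∈ Finset.Icc 1 n, (ℓ : ℚ)⁻¹ * PowerSeries.coeff n (Usub m ℓ) =
        (ℓ : ℚ)⁻¹ * (if ℓ ≤ n ∧ ℓ ∣ n - ℓ then 1 else 0) +
        (ℓ : ℚ)⁻¹ * ∑ j ∈ Finset.Ico 1 m, ∑ h ∈ Finset.Ico 1 j,
          (if (h + j) * ℓ ≤ n ∧ 2 * m * ℓ ∣ n - (h + j) * ℓ then 1 else 0) := by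
      intro ℓ hℓ
      rw [Finset.mem_Icc] at hℓ
      rw [LogGAux.coeff_usub m ℓ n hm hℓ.1, mul_add]
    rw [Finset.sum_congr rfl hcu, Finset.sum_add_distrib]
    simp only [logGeom, PowerSeries.coeff_mk]
    rw [LogGAux.part1 n hn, LogGAux.part2 m n hm hn]
end

section
/- The function σ(x) := 3ζ(3) - 6η₂(x) + 4x η₂′(x) - x² η₂″(x) is strictly positive for all real x > 0, where η₂(x) := Σ_{ℓ ≥ 1} e^{-ℓx}/(ℓ³(1 + e^{-ℓx})). -/
open Real Set

/-- `η₂(x) = Σ_{ℓ ≥ 1} e^{-ℓx}/(ℓ³(1 + e^{-ℓx}))`. -/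
noncomputable def eta2 (x : ℝ) : ℝ :=
  ∑' ℓ : ℕ+, Real.exp (-(ℓ : ℝ) * x) / ((ℓ : ℝ) ^ 3 * (1 + Real.exp (-(ℓ : ℝ) * x)))

/-- `ζ(3) = Σ_{ℓ ≥ 1} 1/ℓ³`. -/
noncomputable def zeta3 : ℝ := ∑' ℓ : ℕ+, ((ℓ : ℝ) ^ 3)⁻¹

noncomputable def F0 (ℓ : ℕ+) (x : ℝ) : ℝ :=
  Real.exp (-(ℓ : ℝ) * x) / ((ℓ : ℝ) ^ 3 * (1 + Real.exp (-(ℓ : ℝ) * x)))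

noncomputable def F1 (ℓ : ℕ+) (x : ℝ) : ℝ :=
  -(Real.exp (-(ℓ : ℝ) * x) / ((ℓ : ℝ) ^ 2 * (1 + Real.exp (-(ℓ : ℝ) * x)) ^ 2))

noncomputable def F2 (ℓ : ℕ+) (x : ℝ) : ℝ :=
  Real.exp (-(ℓ : ℝ) * x) * (1 - Real.exp (-(ℓ : ℝ) * x)) /
    ((ℓ : ℝ) * (1 + Real.exp (-(ℓ : ℝ) * x)) ^ 3)

lemma pnat_cast_pos (ℓ : ℕ+) : (0:ℝ) < (ℓ : ℝ) := by exact_mod_cast ℓ.pos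

lemma pnat_one_le (ℓ : ℕ+) : (1:ℝ) ≤ (ℓ : ℝ) := by exact_mod_cast ℓ.one_le

lemma hasDerivAt_exp_neg (c x : ℝ) :
    HasDerivAt (fun y : ℝ => Real.exp (-c * y)) (-c * Real.exp (-c * x)) x := by
  simpa [mul_comm] using ((hasDerivAt_id x).const_mul (-c)).exp

lemma hasDerivAt_F0 (ℓ : ℕ+) (x : ℝ) : HasDerivAt (F0 ℓ) (F1 ℓ x) x := by
  have hc : (0:ℝ) < (ℓ:ℝ) := pnat_cast_pos ℓ
  have hE := hasDerivAt_exp_neg (ℓ:ℝ) x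
  have hden : HasDerivAt (fun y => (ℓ:ℝ)^3 * (1 + Real.exp (-(ℓ:ℝ)*y)))
      ((ℓ:ℝ)^3 * (-(ℓ:ℝ) * Real.exp (-(ℓ:ℝ)*x))) x := (hE.const_add 1).const_mul _
  have h1u : (0:ℝ) < 1 + Real.exp (-(ℓ:ℝ)*x) := by positivity
  have hne : (ℓ:ℝ)^3 * (1 + Real.exp (-(ℓ:ℝ)*x)) ≠ 0 := by positivity
  have := hE.div hden hne
  refine this.congr_deriv (Eq.symm ?_)
  rw [F1]
  field_simp
  ring

lemma hasDerivAt_F1 (ℓ : ℕ+) (x : ℝ) : HasDerivAt (F1 ℓ) (F2 ℓ x) x := by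
  have hc : (0:ℝ) < (ℓ:ℝ) := pnat_cast_pos ℓ
  have hE := hasDerivAt_exp_neg (ℓ:ℝ) x
  have hden : HasDerivAt (fun y => (ℓ:ℝ)^2 * (1 + Real.exp (-(ℓ:ℝ)*y))^2)
      ((ℓ:ℝ)^2 * ((2:ℕ) * (1 + Real.exp (-(ℓ:ℝ)*x))^1 * (-(ℓ:ℝ) * Real.exp (-(ℓ:ℝ)*x)))) x :=
    ((hE.const_add 1).pow 2).const_mul _
  have h1u : (0:ℝ) < 1 + Real.exp (-(ℓ:ℝ)*x) := by positivity
  have hne : (ℓ:ℝ)^2 * (1 + Real.exp (-(ℓ:ℝ)*x))^2 ≠ 0 := by positivity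
  have := (hE.div hden hne).neg
  refine this.congr_deriv (Eq.symm ?_)
  rw [F2]
  field_simp
  ring

lemma one_le_mul_aux {a b : ℝ} (ha : 1 ≤ a) (hb : 1 ≤ b) : 1 ≤ a * b := by nlinarith

lemma one_le_pow_aux {a : ℝ} (ha : 1 ≤ a) (n : ℕ) : 1 ≤ a ^ n := by
  calc (1:ℝ) = 1^n := (one_pow n).symm
  _ ≤ a^n := pow_le_pow_left₀ zero_le_one ha n

lemma F0_nonneg (ℓ : ℕ+) (y : ℝ) : 0 ≤ F0 ℓ y := by
  have hc : (0:ℝ) < (ℓ:ℝ) := pnat_cast_pos ℓ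
  rw [F0]; positivity

lemma F0_le (ℓ : ℕ+) (y : ℝ) : F0 ℓ y ≤ Real.exp (-(ℓ:ℝ) * y) := by
  have hc : (1:ℝ) ≤ (ℓ:ℝ) := pnat_one_le ℓ
  have hE : (0:ℝ) < Real.exp (-(ℓ:ℝ)*y) := exp_pos _
  have h3 : (1:ℝ) ≤ (ℓ:ℝ)^3 := one_le_pow_aux hc 3
  rw [F0]
  exact div_le_self hE.le (by nlinarith)

lemma F1_norm_le (ℓ : ℕ+) (y : ℝ) : ‖F1 ℓ y‖ ≤ Real.exp (-(ℓ:ℝ) * y) := by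
  have hc : (1:ℝ) ≤ (ℓ:ℝ) := pnat_one_le ℓ
  have hE : (0:ℝ) < Real.exp (-(ℓ:ℝ)*y) := exp_pos _
  have h2 : (1:ℝ) ≤ (ℓ:ℝ)^2 := one_le_pow_aux hc 2
  rw [F1, norm_neg, Real.norm_eq_abs, abs_of_nonneg (by positivity)]
  exact div_le_self hE.le (by nlinarith)

lemma F2_norm_le (ℓ : ℕ+) {y : ℝ} (hy : 0 ≤ y) : ‖F2 ℓ y‖ ≤ Real.exp (-(ℓ:ℝ) * y) := by
  have hc : (1:ℝ) ≤ (ℓ:ℝ) := pnat_one_le ℓ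
  have hE : (0:ℝ) < Real.exp (-(ℓ:ℝ)*y) := exp_pos _
  have hE1 : Real.exp (-(ℓ:ℝ)*y) ≤ 1 := by
    apply exp_le_one_iff.mpr; nlinarith
  have hnum : 0 ≤ Real.exp (-(ℓ:ℝ)*y) * (1 - Real.exp (-(ℓ:ℝ)*y)) :=
    mul_nonneg hE.le (by linarith)
  rw [F2, Real.norm_eq_abs, abs_of_nonneg (div_nonneg hnum (by positivity))]
  calc Real.exp (-(ℓ:ℝ)*y) * (1 - Real.exp (-(ℓ:ℝ)*y)) / ((ℓ:ℝ) * (1 + Real.exp (-(ℓ:ℝ)*y))^3)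
      ≤ Real.exp (-(ℓ:ℝ)*y) * (1 - Real.exp (-(ℓ:ℝ)*y)) := div_le_self hnum
        (one_le_mul_aux hc (one_le_pow_aux (by linarith) 3))
    _ ≤ Real.exp (-(ℓ:ℝ)*y) := by nlinarith

lemma summable_exp_pnat {a : ℝ} (ha : 0 < a) :
    Summable fun ℓ : ℕ+ => Real.exp (-(ℓ : ℝ) * a) := by
  have h : Summable fun n : ℕ => Real.exp (-a) ^ n :=
    summable_geometric_of_lt_one (exp_pos _).le (by rw [exp_lt_one_iff]; linarith)
  have h2 := h.comp_injective PNat.coe_injective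
  refine h2.congr fun ℓ => ?_
  rw [Function.comp_apply, ← Real.exp_nat_mul]
  congr 1
  ring

lemma summable_zeta : Summable fun ℓ : ℕ+ => ((ℓ : ℝ) ^ 3)⁻¹ := by
  have h : Summable fun n : ℕ => ((n : ℝ) ^ 3)⁻¹ := Real.summable_nat_pow_inv.mpr (by norm_num)
  have h2 := h.comp_injective PNat.coe_injective
  exact h2.congr fun ℓ => rfl

lemma summable_F0 {y : ℝ} (hy : 0 < y) : Summable fun ℓ : ℕ+ => F0 ℓ y :=
  Summable.of_nonneg_of_le (fun ℓ => F0_nonneg ℓ y) (fun ℓ => F0_le ℓ y) (summable_exp_pnat hy)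

lemma summable_F1 {y : ℝ} (hy : 0 < y) : Summable fun ℓ : ℕ+ => F1 ℓ y :=
  Summable.of_norm_bounded (summable_exp_pnat hy) (fun ℓ => F1_norm_le ℓ y)

lemma summable_F2 {y : ℝ} (hy : 0 < y) : Summable fun ℓ : ℕ+ => F2 ℓ y :=
  Summable.of_norm_bounded (summable_exp_pnat hy) (fun ℓ => F2_norm_le ℓ hy.le)

lemma exp_mono_pnat (ℓ : ℕ+) {b z : ℝ} (hbz : b ≤ z) :
    Real.exp (-(ℓ:ℝ) * z) ≤ Real.exp (-(ℓ:ℝ) * b) := by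
  have hc : (0:ℝ) < (ℓ:ℝ) := pnat_cast_pos ℓ
  apply exp_le_exp.mpr
  nlinarith

lemma hasDerivAt_eta2 {b y : ℝ} (hb : 0 < b) (hy : y ∈ Ioi b) :
    HasDerivAt eta2 (∑' ℓ : ℕ+, F1 ℓ y) y := by
  have hby : 0 < y := lt_trans hb hy
  have key := hasDerivAt_tsum_of_isPreconnected
    (u := fun ℓ : ℕ+ => Real.exp (-(ℓ:ℝ) * b)) (summable_exp_pnat hb)
    isOpen_Ioi isPreconnected_Ioi
    (g := F0) (g' := F1)
    (fun ℓ z _ => hasDerivAt_F0 ℓ z)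
    (fun ℓ z hz => (F1_norm_le ℓ z).trans (exp_mono_pnat ℓ (le_of_lt hz)))
    hy (summable_F0 hby) hy
  exact key

lemma deriv_eta2_eq {y : ℝ} (hy : 0 < y) : deriv eta2 y = ∑' ℓ : ℕ+, F1 ℓ y :=
  (hasDerivAt_eta2 (half_pos hy) (by simp only [mem_Ioi]; linarith)).deriv

lemma hasDerivAt_eta2' {b y : ℝ} (hb : 0 < b) (hy : y ∈ Ioi b) :
    HasDerivAt (fun z => ∑' ℓ : ℕ+, F1 ℓ z) (∑' ℓ : ℕ+, F2 ℓ y) y := by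
  have hby : 0 < y := lt_trans hb hy
  exact hasDerivAt_tsum_of_isPreconnected
    (u := fun ℓ : ℕ+ => Real.exp (-(ℓ:ℝ) * b)) (summable_exp_pnat hb)
    isOpen_Ioi isPreconnected_Ioi
    (g := F1) (g' := F2)
    (fun ℓ z _ => hasDerivAt_F1 ℓ z)
    (fun ℓ z hz => (F2_norm_le ℓ (le_of_lt (lt_trans hb hz))).trans
      (exp_mono_pnat ℓ (le_of_lt hz)))
    hy (summable_F1 hby) hy

lemma deriv2_eta2_eq {y : ℝ} (hy : 0 < y) : deriv (deriv eta2) y = ∑' ℓ : ℕ+, F2 ℓ y := by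
  have hev : deriv eta2 =ᶠ[nhds y] fun z => ∑' ℓ : ℕ+, F1 ℓ z := by
    filter_upwards [Ioi_mem_nhds (show y/2 < y by linarith)] with z hz
    exact deriv_eta2_eq (by simp only [mem_Ioi] at hz; linarith)
  rw [hev.deriv_eq]
  exact (hasDerivAt_eta2' (half_pos hy) (by simp only [mem_Ioi]; linarith)).deriv

lemma g_pos {t : ℝ} (ht : 0 < t) :
    0 < 3 - 6 * Real.exp (-t) / (1 + Real.exp (-t))
      - 4 * t * Real.exp (-t) / (1 + Real.exp (-t)) ^ 2
      - t ^ 2 * Real.exp (-t) * (1 - Real.exp (-t)) / (1 + Real.exp (-t)) ^ 3 := by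
  set u := Real.exp (-t) with hu
  have hu0 : 0 < u := exp_pos _
  have hu1 : u < 1 := by rw [hu, exp_lt_one_iff]; linarith
  have het : 0 < Real.exp t := exp_pos t
  have h1t : u * (1 + t) < 1 := by
    have h := add_one_lt_exp (x := t) ht.ne'
    rw [hu, exp_neg, inv_mul_lt_one₀ het]
    linarith
  have hq : u * (1 + t + t^2/2 + t^3/6 + t^4/24) ≤ 1 := by
    have h := Real.sum_le_exp_of_nonneg ht.le 5
    have h5 : (1 : ℝ) + t + t^2/2 + t^3/6 + t^4/24 ≤ Real.exp t := by
      norm_num [Finset.sum_range_succ, Nat.factorial] at h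
      linarith
    rw [hu, exp_neg, inv_mul_le_one₀ het]
    linarith
  have hP : 0 < 3 + 2*u - u^2 - 5*u*t - 4*u^2*t - u*t^2 := by
    nlinarith [hq, mul_pos hu0 ht, sq_nonneg (u*t), sq_nonneg (t-2),
      mul_nonneg (mul_nonneg hu0.le hu0.le) ht.le, mul_nonneg hu0.le ht.le, sq_nonneg u, sq_nonneg t]
  have hG : 0 < 3*(1-u)*(1+u)^2 - 4*t*u*(1+u) - t^2*u*(1-u) := by
    have hid : (1+t) * (3*(1-u)*(1+u)^2 - 4*t*u*(1+u) - t^2*u*(1-u))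
        = t * (3 + 2*u - u^2 - 5*u*t - 4*u^2*t - u*t^2)
          + 3*(1+u)^2*(1 - u*(1+t)) + t^2*u^2*(1+t) := by ring
    nlinarith [mul_pos ht hP,
      mul_pos (mul_pos (by positivity : (0:ℝ) < 3*(1+u)^2)
        (by linarith : (0:ℝ) < 1 - u*(1+t))) one_pos,
      mul_nonneg (mul_nonneg (sq_nonneg t) (sq_nonneg u)) (by linarith : (0:ℝ) ≤ 1+t)]
  have expand : 3 - 6*u/(1+u) - 4*t*u/(1+u)^2 - t^2*u*(1-u)/(1+u)^3
      = (3*(1-u)*(1+u)^2 - 4*t*u*(1+u) - t^2*u*(1-u)) / (1+u)^3 := by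
    have h1u : (0:ℝ) < 1 + u := by positivity
    field_simp
    ring
  rw [show 3 - 6 * u / (1 + u) - 4 * t * u / (1 + u) ^ 2 - t ^ 2 * u * (1 - u) / (1 + u) ^ 3
      = 3 - 6*u/(1+u) - 4*t*u/(1+u)^2 - t^2*u*(1-u)/(1+u)^3 from by ring, expand]
  have h1u : (0:ℝ) < 1 + u := by positivity
  exact div_pos hG (by positivity)

lemma term_pos {x : ℝ} (hx : 0 < x) (ℓ : ℕ+) :
    0 < 3 * ((ℓ:ℝ)^3)⁻¹ - 6 * F0 ℓ x + 4*x*F1 ℓ x - x^2 * F2 ℓ x := by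
  have hc : (1:ℝ) ≤ (ℓ:ℝ) := pnat_one_le ℓ
  have hc0 : (0:ℝ) < (ℓ:ℝ) := pnat_cast_pos ℓ
  have ht : 0 < (ℓ:ℝ) * x := mul_pos hc0 hx
  have h1u : (0:ℝ) < 1 + Real.exp (-((ℓ:ℝ)*x)) := by positivity
  have heq : 3 * ((ℓ:ℝ)^3)⁻¹ - 6 * F0 ℓ x + 4*x*F1 ℓ x - x^2 * F2 ℓ x
      = (3 - 6 * Real.exp (-((ℓ:ℝ)*x)) / (1 + Real.exp (-((ℓ:ℝ)*x)))
          - 4 * ((ℓ:ℝ)*x) * Real.exp (-((ℓ:ℝ)*x)) / (1 + Real.exp (-((ℓ:ℝ)*x))) ^ 2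
          - ((ℓ:ℝ)*x) ^ 2 * Real.exp (-((ℓ:ℝ)*x)) * (1 - Real.exp (-((ℓ:ℝ)*x)))
            / (1 + Real.exp (-((ℓ:ℝ)*x))) ^ 3) / (ℓ:ℝ)^3 := by
    rw [F0, F1, F2]
    rw [neg_mul]
    field_simp
    ring
  rw [heq]
  exact div_pos (g_pos ht) (by positivity)

/-- `σ(x) := 3ζ(3) - 6η₂(x) + 4x·η₂′(x) - x²·η₂″(x)` is strictly positive for `x > 0`. -/
theorem sigma_pos (x : ℝ) (hx : 0 < x) :
    0 < 3 * zeta3 - 6 * eta2 x + 4 * x * deriv eta2 x - x ^ 2 * deriv (deriv eta2) x := by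
  have hS0 : Summable fun ℓ : ℕ+ => F0 ℓ x := summable_F0 hx
  have hS1 : Summable fun ℓ : ℕ+ => F1 ℓ x := summable_F1 hx
  have hS2 : Summable fun ℓ : ℕ+ => F2 ℓ x := summable_F2 hx
  have hSz : Summable fun ℓ : ℕ+ => ((ℓ:ℝ)^3)⁻¹ := summable_zeta
  rw [deriv_eta2_eq hx, deriv2_eta2_eq hx,
    show eta2 x = ∑' ℓ : ℕ+, F0 ℓ x from rfl,
    show zeta3 = ∑' ℓ : ℕ+, ((ℓ:ℝ)^3)⁻¹ from rfl]
  rw [← tsum_mul_left (a := (3:ℝ)), ← tsum_mul_left (a := (6:ℝ)),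
    ← tsum_mul_left (a := 4*x), ← tsum_mul_left (a := x^2)]
  rw [← Summable.tsum_sub (hSz.mul_left 3) (hS0.mul_left 6),
    ← Summable.tsum_add ((hSz.mul_left 3).sub (hS0.mul_left 6)) (hS1.mul_left (4*x)),
    ← Summable.tsum_sub (((hSz.mul_left 3).sub (hS0.mul_left 6)).add (hS1.mul_left (4*x)))
      (hS2.mul_left (x^2))]
  exact Summable.tsum_pos ((((hSz.mul_left 3).sub (hS0.mul_left 6)).add (hS1.mul_left (4*x))).sub
    (hS2.mul_left (x^2))) (fun ℓ => (term_pos hx ℓ).le) 1 (term_pos hx 1)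
end

section
/- For each fixed α > 0, the equation r³ = ζ(3) - 2η₂(αr) + αr·η₂′(αr) has a unique solution r > 0, where η₂(x) := Σ_{ℓ ≥ 1} e^{-ℓx}/(ℓ³(1 + e^{-ℓx})). -/
open Real Set

namespace SaddleAux

/-- summand of `eta2` -/
noncomputable def F (ℓ : ℕ+) (x : ℝ) : ℝ :=
  Real.exp (-(ℓ : ℝ) * x) / ((ℓ : ℝ) ^ 3 * (1 + Real.exp (-(ℓ : ℝ) * x)))

/-- derivative of the summand -/
noncomputable def F' (ℓ : ℕ+) (x : ℝ) : ℝ :=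
  -(Real.exp (-(ℓ : ℝ) * x) / ((ℓ : ℝ) ^ 2 * (1 + Real.exp (-(ℓ : ℝ) * x)) ^ 2))

lemma pnat_pos (ℓ : ℕ+) : (0:ℝ) < (ℓ:ℝ) := by exact_mod_cast ℓ.pos

lemma summable_inv_cube : Summable (fun ℓ : ℕ+ => ((ℓ:ℝ)^3)⁻¹) := by
  have h : Summable (fun n : ℕ => ((n:ℝ)^3)⁻¹) :=
    Real.summable_nat_pow_inv.mpr (by norm_num)
  exact h.comp_injective (fun a b hab => PNat.coe_injective hab)

lemma F_nonneg (ℓ : ℕ+) (x : ℝ) : 0 ≤ F ℓ x := by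
  unfold F
  have := Real.exp_pos (-(ℓ:ℝ)*x)
  positivity

lemma F_le (ℓ : ℕ+) (x : ℝ) : F ℓ x ≤ ((ℓ:ℝ)^3)⁻¹ := by
  unfold F
  have ha := Real.exp_pos (-(ℓ:ℝ)*x)
  have hl := pnat_pos ℓ
  rw [div_le_iff₀ (by positivity)]
  have h1 : (0:ℝ) < (ℓ:ℝ)^3 := by positivity
  rw [inv_mul_eq_div, le_div_iff₀ h1]
  nlinarith [ha.le, h1]

lemma summable_F (x : ℝ) : Summable (fun ℓ : ℕ+ => F ℓ x) :=
  Summable.of_nonneg_of_le (fun ℓ => F_nonneg ℓ x) (fun ℓ => F_le ℓ x) summable_inv_cube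

lemma summable_exp {c : ℝ} (hc : 0 < c) :
    Summable (fun ℓ : ℕ+ => Real.exp (-(ℓ:ℝ) * c)) := by
  have h : Summable (fun n : ℕ => Real.exp (-(n:ℝ) * c)) := by
    have : (fun n : ℕ => Real.exp (-(n:ℝ) * c)) = fun n : ℕ => (Real.exp (-c))^n := by
      funext n
      rw [← Real.exp_nat_mul]
      ring_nf
    rw [this]
    exact summable_geometric_of_lt_one (Real.exp_pos _).le
      (Real.exp_lt_one_iff.mpr (by linarith))
  exact h.comp_injective (fun a b hab => PNat.coe_injective hab)

lemma hasDerivAt_F (ℓ : ℕ+) (y : ℝ) : HasDerivAt (fun z => F ℓ z) (F' ℓ y) y := by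
  have hl := pnat_pos ℓ
  have ha := Real.exp_pos (-(ℓ:ℝ)*y)
  have h1 : HasDerivAt (fun z : ℝ => -(ℓ:ℝ) * z) (-(ℓ:ℝ) * 1) y := (hasDerivAt_id y).const_mul _
  have h2 : HasDerivAt (fun z : ℝ => Real.exp (-(ℓ:ℝ) * z))
      (Real.exp (-(ℓ:ℝ)*y) * (-(ℓ:ℝ) * 1)) y := h1.exp
  have h3 : HasDerivAt (fun z : ℝ => (ℓ:ℝ)^3 * (1 + Real.exp (-(ℓ:ℝ) * z)))
      ((ℓ:ℝ)^3 * (Real.exp (-(ℓ:ℝ)*y) * (-(ℓ:ℝ) * 1))) y := (h2.const_add 1).const_mul _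
  have hne : (ℓ:ℝ)^3 * (1 + Real.exp (-(ℓ:ℝ)*y)) ≠ 0 := by positivity
  have h4 := h2.div h3 hne
  refine h4.congr_deriv ?_
  unfold F'
  field_simp
  ring

lemma norm_F'_le {ℓ : ℕ+} {c y : ℝ} (hcy : c ≤ y) :
    ‖F' ℓ y‖ ≤ Real.exp (-(ℓ:ℝ) * c) := by
  have hl := pnat_pos ℓ
  have hl1 : (1:ℝ) ≤ (ℓ:ℝ) := by exact_mod_cast ℓ.one_le
  have ha := Real.exp_pos (-(ℓ:ℝ)*y)
  have hle : F' ℓ y ≤ 0 := by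
    unfold F'
    have : 0 ≤ Real.exp (-(ℓ:ℝ)*y) / ((ℓ:ℝ)^2 * (1 + Real.exp (-(ℓ:ℝ)*y))^2) := by positivity
    linarith
  rw [Real.norm_eq_abs, abs_of_nonpos hle]
  unfold F'
  rw [neg_neg]
  have hbd : Real.exp (-(ℓ:ℝ)*y) / ((ℓ:ℝ)^2 * (1 + Real.exp (-(ℓ:ℝ)*y))^2)
      ≤ Real.exp (-(ℓ:ℝ)*y) := by
    have hd : (1:ℝ) ≤ (ℓ:ℝ)^2 * (1 + Real.exp (-(ℓ:ℝ)*y))^2 := by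
      have e1 : (1:ℝ) ≤ (ℓ:ℝ)^2 := by nlinarith
      have e2 : (1:ℝ) ≤ (1 + Real.exp (-(ℓ:ℝ)*y))^2 := by nlinarith
      nlinarith [mul_le_mul e1 e2 zero_le_one (by positivity : (0:ℝ) ≤ (ℓ:ℝ)^2)]
    calc Real.exp (-(ℓ:ℝ)*y) / ((ℓ:ℝ)^2 * (1 + Real.exp (-(ℓ:ℝ)*y))^2)
        ≤ Real.exp (-(ℓ:ℝ)*y) / 1 := by
          apply div_le_div_of_nonneg_left ha.le (by norm_num) hd
      _ = Real.exp (-(ℓ:ℝ)*y) := by ring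
  refine hbd.trans (Real.exp_le_exp.mpr ?_)
  nlinarith

lemma summable_F' {x : ℝ} (hx : 0 < x) : Summable (fun ℓ : ℕ+ => F' ℓ x) := by
  apply Summable.of_norm
  exact Summable.of_nonneg_of_le (fun ℓ => norm_nonneg _)
    (fun ℓ => norm_F'_le le_rfl) (summable_exp hx)

lemma hasDerivAt_eta2 {x : ℝ} (hx : 0 < x) :
    HasDerivAt eta2 (∑' ℓ : ℕ+, F' ℓ x) x := by
  have heq : eta2 = fun z => ∑' ℓ : ℕ+, F ℓ z := rfl
  rw [heq]
  refine hasDerivAt_tsum_of_isPreconnected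
    (u := fun ℓ : ℕ+ => Real.exp (-(ℓ:ℝ) * (x/2)))
    (summable_exp (half_pos hx)) isOpen_Ioi isPreconnected_Ioi
    (fun ℓ y _ => hasDerivAt_F ℓ y) (fun ℓ y hy => norm_F'_le (le_of_lt hy))
    (mem_Ioi.mpr (half_lt_self hx)) (summable_F x) (mem_Ioi.mpr (half_lt_self hx))

/-- `G t = (1 - e^{-2t} - t e^{-t}) / (t³ (1+e^{-t})²)`. -/
noncomputable def G (t : ℝ) : ℝ :=
  (1 - Real.exp (-2*t) - t * Real.exp (-t)) / (t^3 * (1 + Real.exp (-t))^2)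

/-- rescaled version of the saddle function. -/
noncomputable def S (x : ℝ) : ℝ := ∑' ℓ : ℕ+, G ((ℓ:ℝ) * x)

/-- key inequality (i): `2 t e^{-t} < 1 - e^{-2t}` for `t > 0`, i.e. `sinh t > t`. -/
lemma key1 {t : ℝ} (ht : 0 < t) : 2*t*Real.exp (-t) < 1 - Real.exp (-t)^2 := by
  set k : ℝ → ℝ := fun s => 1 - Real.exp (-s)^2 - 2*s*Real.exp (-s) with hk
  have hd : ∀ s : ℝ, HasDerivAt k
      (2*Real.exp (-s)^2 - 2*Real.exp (-s) + 2*s*Real.exp (-s)) s := by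
    intro s
    have h1 : HasDerivAt (fun z : ℝ => -z) (-1) s := (hasDerivAt_id s).neg
    have h2 : HasDerivAt (fun z : ℝ => Real.exp (-z)) (Real.exp (-s) * (-1)) s := h1.exp
    have h3 : HasDerivAt (fun z : ℝ => Real.exp (-z)^2)
        (2 * Real.exp (-s) ^ 1 * (Real.exp (-s) * (-1))) s := h2.pow 2
    have h4 : HasDerivAt (fun z : ℝ => 2*z*Real.exp (-z))
        (2 * Real.exp (-s) + 2*s*(Real.exp (-s) * (-1))) s := by
      have h5 : HasDerivAt (fun z : ℝ => 2*z) 2 s := by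
        simpa using (hasDerivAt_id s).const_mul (2:ℝ)
      exact h5.mul h2
    have := ((h3.const_sub 1).sub h4)
    exact this.congr_deriv (by ring)
  have hmono : StrictMonoOn k (Ici 0) := by
    apply strictMonoOn_of_deriv_pos (convex_Ici 0)
    · exact fun s _ => ((hd s).continuousAt).continuousWithinAt
    · intro s hs
      rw [interior_Ici] at hs
      rw [(hd s).deriv]
      have ha := Real.exp_pos (-s)
      have hb : 1 - s < Real.exp (-s) := by
        have := Real.add_one_lt_exp (show -s ≠ 0 by exact neg_ne_zero.mpr (ne_of_gt hs))
        linarith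
      nlinarith
  have h0 : k 0 < k t := hmono (self_mem_Ici) (mem_Ici.mpr ht.le) ht
  simp only [hk] at h0
  norm_num at h0
  linarith

/-- key inequality (ii): `t² e^{-t} < 1` for `t > 0`. -/
lemma key2 {t : ℝ} (ht : 0 < t) : t^2 * Real.exp (-t) < 1 := by
  have h4 : 1 + t/4 < Real.exp (t/4) := by
    have := Real.add_one_lt_exp (show t/4 ≠ 0 by positivity)
    linarith
  have e2 : Real.exp (t/2) = Real.exp (t/4)^2 := by
    rw [sq, ← Real.exp_add]; ring_nf
  have h2 : t < Real.exp (t/2) := by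
    rw [e2]; nlinarith [sq_nonneg (1 - t/4), Real.exp_pos (t/4)]
  have h1 : t^2 < Real.exp t := by
    have e1 : Real.exp t = Real.exp (t/2)^2 := by
      rw [sq, ← Real.exp_add]; ring_nf
    rw [e1]; nlinarith [Real.exp_pos (t/2)]
  rw [Real.exp_neg]
  have := Real.exp_pos t
  rw [mul_inv_lt_iff₀' this]
  simpa using h1

lemma exp_neg_two_eq (t : ℝ) : Real.exp (-2*t) = Real.exp (-t)^2 := by
  rw [sq, ← Real.exp_add]; ring_nf

/-- candidate derivative of `G` -/
noncomputable def GD (t : ℝ) : ℝ :=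
  ((2*Real.exp (-2*t) - Real.exp (-t) + t*Real.exp (-t)) * (t^3 * (1 + Real.exp (-t))^2)
    - (1 - Real.exp (-2*t) - t * Real.exp (-t))
      * (3*t^2*(1 + Real.exp (-t))^2 - 2*t^3*(1 + Real.exp (-t))*Real.exp (-t)))
  / (t^3 * (1 + Real.exp (-t))^2)^2

lemma hasDerivAt_G {t : ℝ} (ht : 0 < t) : HasDerivAt G (GD t) t := by
  have h1 : HasDerivAt (fun z : ℝ => -z) (-1) t := (hasDerivAt_id t).neg
  have h2 : HasDerivAt (fun z : ℝ => Real.exp (-z)) (Real.exp (-t) * (-1)) t := h1.exp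
  have h1' : HasDerivAt (fun z : ℝ => -2*z) (-2) t := by
    simpa using (hasDerivAt_id t).const_mul (-2:ℝ)
  have h2' : HasDerivAt (fun z : ℝ => Real.exp (-2*z)) (Real.exp (-2*t) * (-2)) t := h1'.exp
  have hN : HasDerivAt (fun z : ℝ => 1 - Real.exp (-2*z) - z * Real.exp (-z))
      (2*Real.exp (-2*t) - Real.exp (-t) + t*Real.exp (-t)) t := by
    have h3 : HasDerivAt (fun z : ℝ => z * Real.exp (-z))
        (1 * Real.exp (-t) + t * (Real.exp (-t) * (-1))) t := (hasDerivAt_id t).mul h2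
    have := (h2'.const_sub 1).sub h3
    exact this.congr_deriv (by ring)
  have hD : HasDerivAt (fun z : ℝ => z^3 * (1 + Real.exp (-z))^2)
      (3*t^2*(1 + Real.exp (-t))^2 - 2*t^3*(1 + Real.exp (-t))*Real.exp (-t)) t := by
    have h3 : HasDerivAt (fun z : ℝ => z^3) (3*t^2) t := by
      simpa using hasDerivAt_pow 3 t
    have h4 : HasDerivAt (fun z : ℝ => (1 + Real.exp (-z))^2)
        (2 * (1 + Real.exp (-t)) ^ 1 * (Real.exp (-t) * (-1))) t := (h2.const_add 1).pow 2
    have := h3.mul h4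
    exact this.congr_deriv (by ring)
  have hne : t^3 * (1 + Real.exp (-t))^2 ≠ 0 := by
    have := Real.exp_pos (-t); positivity
  exact hN.div hD hne

lemma GD_neg {t : ℝ} (ht : 0 < t) : GD t < 0 := by
  have ha := Real.exp_pos (-t)
  have ha1 : Real.exp (-t) < 1 := Real.exp_lt_one_iff.mpr (by linarith)
  have h1 := key1 ht
  have h2 := key2 ht
  set a := Real.exp (-t) with haa
  unfold GD
  rw [exp_neg_two_eq]
  rw [div_neg_iff]
  right
  constructor
  · have hnum : (2*a^2 - a + t*a) * (t^3 * (1 + a)^2)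
        - (1 - a^2 - t * a) * (3*t^2*(1 + a)^2 - 2*t^3*(1 + a)*a)
        = -(t^2*(1+a)*(2*(1+a)*(1 - a^2 - 2*t*a) + (1-a)*((1+a)^2 - t^2*a))) := by
      ring
    rw [hnum]
    have hb1 : 0 < 1 - a^2 - 2*t*a := by linarith
    have hb2 : 0 < (1+a)^2 - t^2*a := by nlinarith
    have : 0 < t^2*(1+a)*(2*(1+a)*(1 - a^2 - 2*t*a) + (1-a)*((1+a)^2 - t^2*a)) := by
      have e1 : 0 < 2*(1+a)*(1 - a^2 - 2*t*a) := by positivity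
      have e2 : 0 ≤ (1-a)*((1+a)^2 - t^2*a) := by nlinarith
      have e3 : 0 < t^2*(1+a) := by positivity
      nlinarith
    linarith
  · positivity

lemma G_anti : StrictAntiOn G (Ioi 0) := by
  apply strictAntiOn_of_deriv_neg (convex_Ioi 0)
  · exact fun t ht => ((hasDerivAt_G ht).continuousAt).continuousWithinAt
  · intro t ht
    rw [interior_Ioi] at ht
    rw [(hasDerivAt_G ht).deriv]
    exact GD_neg ht

lemma G_pos {t : ℝ} (ht : 0 < t) : 0 < G t := by
  have ha := Real.exp_pos (-t)
  have h1 := key1 ht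
  unfold G
  rw [exp_neg_two_eq]
  apply div_pos
  · nlinarith [mul_pos ht ha]
  · positivity

lemma G_le {t : ℝ} (ht : 0 < t) : G t ≤ (t^3)⁻¹ := by
  have ha := Real.exp_pos (-t)
  unfold G
  rw [exp_neg_two_eq, inv_eq_one_div, div_le_div_iff₀ (by positivity) (by positivity)]
  nlinarith [mul_pos ht ha, sq_nonneg (Real.exp (-t)), pow_pos ht 3,
    mul_pos (mul_pos ht ht) ht]

lemma G_lb {t : ℝ} (ht : 0 < t) (ht2 : t ≤ 1/2) : (8*t^2)⁻¹ ≤ G t := by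
  have ha := Real.exp_pos (-t)
  have ha1 : Real.exp (-t) < 1 := Real.exp_lt_one_iff.mpr (by linarith)
  have h1 := key1 ht
  have hahalf : (1/2 : ℝ) ≤ Real.exp (-t) := by
    have h5 : Real.exp (-(1/2) : ℝ) ≤ Real.exp (-t) := Real.exp_le_exp.mpr (by linarith)
    refine le_trans ?_ h5
    have h6 : Real.exp (1/2 : ℝ)^2 = Real.exp 1 := by rw [sq, ← Real.exp_add]; norm_num
    have h7 : Real.exp (1/2 : ℝ) ≤ 2 := by
      nlinarith [Real.exp_one_lt_d9, Real.exp_pos (1/2 : ℝ)]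
    have h8 := one_div_le_one_div_of_le (Real.exp_pos (1/2 : ℝ)) h7
    rw [Real.exp_neg, ← one_div]
    norm_num at h8 ⊢
    linarith
  unfold G
  rw [exp_neg_two_eq]
  set a := Real.exp (-t)
  rw [inv_eq_one_div, div_le_div_iff₀ (by positivity) (by positivity)]
  have hnum : t/2 ≤ 1 - a^2 - t*a := by nlinarith
  have e1 : t^3*(1+a)^2 ≤ 4*t^3 := by
    have h4 : (1+a)^2 ≤ 4 := by nlinarith
    nlinarith [mul_le_mul_of_nonneg_left h4 (pow_pos ht 3).le]
  have e2 : 4*t^3 ≤ (1 - a^2 - t*a)*(8*t^2) := by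
    nlinarith [mul_le_mul_of_nonneg_right hnum (by positivity : (0:ℝ) ≤ 8*t^2)]
  linarith

/-- termwise identity -/
lemma term_eq (ℓ : ℕ+) {x : ℝ} (hx : 0 < x) :
    ((ℓ:ℝ)^3)⁻¹ - 2 * F ℓ x + x * F' ℓ x = x^3 * G ((ℓ:ℝ)*x) := by
  have hl := pnat_pos ℓ
  have ha := Real.exp_pos (-(ℓ:ℝ)*x)
  unfold F F' G
  have e1 : -((ℓ:ℝ)*x) = -(ℓ:ℝ)*x := by ring
  have e2 : Real.exp (-2*((ℓ:ℝ)*x)) = Real.exp (-(ℓ:ℝ)*x)^2 := by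
    rw [sq, ← Real.exp_add]; ring_nf
  rw [e1, e2]
  have h1 : (1:ℝ) + Real.exp (-(ℓ:ℝ)*x) ≠ 0 := by positivity
  have h2 : ((ℓ:ℝ):ℝ) ≠ 0 := ne_of_gt hl
  have h3 : x ≠ 0 := ne_of_gt hx
  field_simp
  ring

lemma G_le' (ℓ : ℕ+) {x : ℝ} (hx : 0 < x) :
    G ((ℓ:ℝ)*x) ≤ (x^3)⁻¹ * ((ℓ:ℝ)^3)⁻¹ := by
  have hl := pnat_pos ℓ
  have := G_le (mul_pos hl hx)
  calc G ((ℓ:ℝ)*x) ≤ (((ℓ:ℝ)*x)^3)⁻¹ := this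
    _ = (x^3)⁻¹ * ((ℓ:ℝ)^3)⁻¹ := by rw [mul_pow, mul_inv]; ring

lemma summable_G {x : ℝ} (hx : 0 < x) : Summable (fun ℓ : ℕ+ => G ((ℓ:ℝ)*x)) :=
  Summable.of_nonneg_of_le (fun ℓ => (G_pos (mul_pos (pnat_pos ℓ) hx)).le)
    (fun ℓ => G_le' ℓ hx) (summable_inv_cube.mul_left _)

/-- the basic reduction: for `x > 0`, `ζ(3) - 2 η₂(x) + x η₂'(x) = x³ S x`. -/
lemma R_eq {x : ℝ} (hx : 0 < x) :
    zeta3 - 2 * eta2 x + x * deriv eta2 x = x^3 * S x := by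
  rw [(hasDerivAt_eta2 hx).deriv]
  have h1 := summable_inv_cube
  have h2 := summable_F x
  have h3 := summable_F' hx
  have heta : eta2 x = ∑' ℓ : ℕ+, F ℓ x := rfl
  have hz : zeta3 = ∑' ℓ : ℕ+, ((ℓ:ℝ)^3)⁻¹ := rfl
  rw [heta, hz, ← tsum_mul_left, ← tsum_mul_left,
    ← Summable.tsum_sub h1 (h2.mul_left 2), ← Summable.tsum_add ((h1.sub (h2.mul_left 2))) (h3.mul_left x)]
  rw [show (∑' ℓ : ℕ+, (((ℓ:ℝ)^3)⁻¹ - 2 * F ℓ x + x * F' ℓ x))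
      = ∑' ℓ : ℕ+, x^3 * G ((ℓ:ℝ)*x) from tsum_congr (fun ℓ => term_eq ℓ hx)]
  rw [tsum_mul_left]
  rfl

lemma S_le {x : ℝ} (hx : 0 < x) : S x ≤ (x^3)⁻¹ * zeta3 := by
  have h := Summable.tsum_le_tsum (fun ℓ => G_le' ℓ hx) (summable_G hx)
    (summable_inv_cube.mul_left ((x^3)⁻¹))
  rw [tsum_mul_left] at h
  exact h

lemma G_le_S {x : ℝ} (hx : 0 < x) : G x ≤ S x := by
  have h := Summable.le_tsum (summable_G hx) 1
    (fun ℓ _ => (G_pos (mul_pos (pnat_pos ℓ) hx)).le)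
  simpa [S] using h

lemma S_anti : StrictAntiOn S (Ioi 0) := by
  intro x hx y hy hxy
  apply Summable.tsum_lt_tsum (f := fun ℓ : ℕ+ => G ((ℓ:ℝ)*y)) (g := fun ℓ : ℕ+ => G ((ℓ:ℝ)*x))
    (i := 1)
  · intro ℓ
    have hl := pnat_pos ℓ
    exact (G_anti (mem_Ioi.mpr (mul_pos hl (mem_Ioi.mp hx)))
      (mem_Ioi.mpr (mul_pos hl (mem_Ioi.mp hy)))
      (by exact mul_lt_mul_of_pos_left hxy hl)).le
  · have := G_anti (mem_Ioi.mpr (by simpa using (mem_Ioi.mp hx)))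
      (mem_Ioi.mpr (by simpa using (mem_Ioi.mp hy))) (by simpa using hxy)
    simpa using this
  · exact summable_G (mem_Ioi.mp hy)
  · exact summable_G (mem_Ioi.mp hx)

lemma S_contOn {a b : ℝ} (ha : 0 < a) : ContinuousOn S (Icc a b) := by
  apply continuousOn_tsum (u := fun ℓ : ℕ+ => (a^3)⁻¹ * ((ℓ:ℝ)^3)⁻¹)
  · intro ℓ x hx
    have hl := pnat_pos ℓ
    have hx0 : 0 < x := lt_of_lt_of_le ha hx.1
    exact (((hasDerivAt_G (mul_pos hl hx0)).continuousAt).comp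
      ((continuous_const.mul continuous_id).continuousAt)).continuousWithinAt
  · exact summable_inv_cube.mul_left _
  · intro ℓ x hx
    have hl := pnat_pos ℓ
    have hx0 : 0 < x := lt_of_lt_of_le ha hx.1
    rw [Real.norm_eq_abs, abs_of_nonneg (G_pos (mul_pos hl hx0)).le]
    calc G ((ℓ:ℝ)*x) ≤ (((ℓ:ℝ)*x)^3)⁻¹ := G_le (mul_pos hl hx0)
      _ ≤ (((ℓ:ℝ)*a)^3)⁻¹ := by
          apply inv_anti₀ (by positivity)
          exact pow_le_pow_left₀ (by positivity) (by nlinarith [hx.1]) 3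
      _ = (a^3)⁻¹ * ((ℓ:ℝ)^3)⁻¹ := by rw [mul_pow, mul_inv]; ring

lemma zeta3_nonneg : 0 ≤ zeta3 := tsum_nonneg (fun ℓ => by positivity)

end SaddleAux

open SaddleAux in
/-- For each fixed `α > 0`, the equation `r³ = ζ(3) - 2η₂(αr) + αr·η₂′(αr)` has a
unique solution `r > 0`. -/
theorem unique_saddle_root (α : ℝ) (hα : 0 < α) :
    ∃! r : ℝ, 0 < r ∧
      r ^ 3 = zeta3 - 2 * eta2 (α * r) + α * r * deriv eta2 (α * r) := by
  have hα3 : (0:ℝ) < α^3 := by positivity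
  have equiv : ∀ r : ℝ, 0 < r →
      ((r ^ 3 = zeta3 - 2 * eta2 (α * r) + α * r * deriv eta2 (α * r)) ↔
        S (α * r) = (α^3)⁻¹) := by
    intro r hr
    have hx : 0 < α * r := mul_pos hα hr
    rw [R_eq hx]
    have hr3 : (0:ℝ) < r^3 := by positivity
    constructor
    · intro h
      have h' : r^3 * 1 = r^3 * (α^3 * S (α*r)) := by
        rw [mul_one]; nth_rewrite 1 [h]; ring
      have h1 : (1:ℝ) = α^3 * S (α*r) := mul_left_cancel₀ (ne_of_gt hr3) h'
      exact eq_inv_of_mul_eq_one_right h1.symm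
    · intro h
      rw [h, mul_pow,
        show α^3*r^3*(α^3)⁻¹ = (α^3*(α^3)⁻¹)*r^3 by ring,
        mul_inv_cancel₀ (ne_of_gt hα3), one_mul]
  -- endpoints for the IVT
  set a : ℝ := min (1/2) (α^3/(8*(α^3+1))) with ha_def
  have ha0 : 0 < a := lt_min (by norm_num) (by positivity)
  have ha2 : a ≤ 1/2 := min_le_left _ _
  have hkey : 8*a^2 < α^3 := by
    have h1 : a ≤ α^3/(8*(α^3+1)) := min_le_right _ _
    have h2 : a ≤ 1 := ha2.trans (by norm_num)
    have h3 : a^2 ≤ a := by nlinarith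
    have h4 : α^3/(8*(α^3+1)) < α^3/8 := by
      apply div_lt_div_of_pos_left hα3 (by norm_num) (by nlinarith)
    nlinarith
  have hSa : (α^3)⁻¹ < S a := by
    have h5 : (α^3)⁻¹ < (8*a^2)⁻¹ := by
      apply inv_strictAnti₀ (by positivity) hkey
    exact lt_of_lt_of_le h5 ((G_lb ha0 ha2).trans (G_le_S ha0))
  set b : ℝ := max 1 (α*(zeta3+1)) with hb_def
  have hb1 : (1:ℝ) ≤ b := le_max_left _ _
  have hb0 : 0 < b := lt_of_lt_of_le one_pos hb1
  have hab : a ≤ b := le_trans (ha2.trans (by norm_num)) hb1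
  have hSb : S b ≤ (α^3)⁻¹ := by
    have h6 : α*(zeta3+1) ≤ b := le_max_right _ _
    have hz := zeta3_nonneg
    have h7 : α^3 * zeta3 < b^3 := by
      have h8 : (α*(zeta3+1))^3 ≤ b^3 := by
        apply pow_le_pow_left₀ (by positivity) h6
      have h9 : α^3*(zeta3+1) ≤ (α*(zeta3+1))^3 := by
        have : (1:ℝ) ≤ (zeta3+1)^2 := by nlinarith
        rw [mul_pow]
        nlinarith [mul_le_mul_of_nonneg_left this (by positivity : (0:ℝ) ≤ α^3*(zeta3+1))]
      nlinarith
    calc S b ≤ (b^3)⁻¹ * zeta3 := S_le hb0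
      _ ≤ (α^3)⁻¹ := by
          rw [inv_mul_eq_div, inv_eq_one_div, div_le_div_iff₀ (by positivity) hα3]
          nlinarith [h7]
  obtain ⟨x, hxmem, hxval⟩ := intermediate_value_Icc' hab (S_contOn ha0)
    (mem_Icc.mpr ⟨hSb, hSa.le⟩)
  have hx0 : 0 < x := lt_of_lt_of_le ha0 hxmem.1
  refine ⟨x/α, ⟨by positivity, ?_⟩, ?_⟩
  · have hr : 0 < x/α := by positivity
    rw [equiv _ hr, show α*(x/α) = x by field_simp]
    exact hxval
  · rintro r ⟨hr, heq⟩
    have h1 : S (α*r) = (α^3)⁻¹ := (equiv r hr).1 heq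
    have h2 : α*r = x := by
      apply S_anti.injOn (mem_Ioi.mpr (mul_pos hα hr)) (mem_Ioi.mpr hx0)
      rw [h1, hxval]
    rw [← h2]
    field_simp
end

section
/- For all real x with 0 ≤ x ≤ 1/2, one has -x² ≤ cos x/(1 - cos x) - 2/x² + 5/6 ≤ x² (with the middle expression extended by its limit value 0 at x = 0). -/
open Real Filter


lemma aux_nonneg (f : ℝ → ℝ) (hf : Differentiable ℝ f) (h0 : f 0 = 0)
    (hd : ∀ y : ℝ, 0 ≤ y → 0 ≤ deriv f y) : ∀ x : ℝ, 0 ≤ x → 0 ≤ f x := by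
  intro x hx
  have hmono : MonotoneOn f (Set.Ici 0) :=
    monotoneOn_of_deriv_nonneg (convex_Ici 0) hf.continuous.continuousOn
      (fun y _ => (hf y).differentiableWithinAt)
      (fun y hy => hd y (le_of_lt (by simpa using hy)))
  calc (0:ℝ) = f 0 := h0.symm
    _ ≤ f x := hmono (Set.self_mem_Ici) hx hx

lemma sin_lb {x : ℝ} (hx : 0 ≤ x) : x - x ^ 3 / 6 ≤ Real.sin x := by
  have key := aux_nonneg (fun y => Real.sin y - y + y ^ 3 / 6)
    (by fun_prop) (by norm_num)
    (fun y hy => by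
      have h : HasDerivAt (fun y : ℝ => Real.sin y - y + y ^ 3 / 6)
          (Real.cos y - 1 + (3 * y ^ 2) / 6) y :=
        ((Real.hasDerivAt_sin y).sub (hasDerivAt_id y)).add
          ((hasDerivAt_pow 3 y).div_const 6)
      rw [h.deriv]
      nlinarith [Real.one_sub_sq_div_two_le_cos (x := y)]) x hx
  linarith

lemma cos_ub4 {x : ℝ} (hx : 0 ≤ x) : Real.cos x ≤ 1 - x ^ 2 / 2 + x ^ 4 / 24 := by
  have key := aux_nonneg (fun y => 1 - y ^ 2 / 2 + y ^ 4 / 24 - Real.cos y)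
    (by fun_prop) (by norm_num)
    (fun y hy => by
      have h : HasDerivAt (fun y : ℝ => 1 - y ^ 2 / 2 + y ^ 4 / 24 - Real.cos y)
          (0 - (2 * y ^ 1) / 2 + (4 * y ^ 3) / 24 - (-Real.sin y)) y :=
        (((hasDerivAt_const y (1:ℝ)).sub ((hasDerivAt_pow 2 y).div_const 2)).add
          ((hasDerivAt_pow 4 y).div_const 24)).sub (Real.hasDerivAt_cos y)
      rw [h.deriv]
      have := sin_lb hy
      nlinarith) x hx
  linarith

lemma sin_ub {x : ℝ} (hx : 0 ≤ x) : Real.sin x ≤ x - x ^ 3 / 6 + x ^ 5 / 120 := by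
  have key := aux_nonneg (fun y => y - y ^ 3 / 6 + y ^ 5 / 120 - Real.sin y)
    (by fun_prop) (by norm_num)
    (fun y hy => by
      have h : HasDerivAt (fun y : ℝ => y - y ^ 3 / 6 + y ^ 5 / 120 - Real.sin y)
          (1 - (3 * y ^ 2) / 6 + (5 * y ^ 4) / 120 - Real.cos y) y :=
        (((hasDerivAt_id y).sub ((hasDerivAt_pow 3 y).div_const 6)).add
          ((hasDerivAt_pow 5 y).div_const 120)).sub (Real.hasDerivAt_sin y)
      rw [h.deriv]
      have := cos_ub4 hy
      nlinarith) x hx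
  linarith

lemma cos_lb6 {x : ℝ} (hx : 0 ≤ x) :
    1 - x ^ 2 / 2 + x ^ 4 / 24 - x ^ 6 / 720 ≤ Real.cos x := by
  have key := aux_nonneg
    (fun y => Real.cos y - (1 - y ^ 2 / 2 + y ^ 4 / 24 - y ^ 6 / 720))
    (by fun_prop) (by norm_num)
    (fun y hy => by
      have h : HasDerivAt
          (fun y : ℝ => Real.cos y - (1 - y ^ 2 / 2 + y ^ 4 / 24 - y ^ 6 / 720))
          (-Real.sin y - (0 - (2 * y ^ 1) / 2 + (4 * y ^ 3) / 24 - (6 * y ^ 5) / 720)) y :=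
        (Real.hasDerivAt_cos y).sub
          ((((hasDerivAt_const y (1:ℝ)).sub ((hasDerivAt_pow 2 y).div_const 2)).add
            ((hasDerivAt_pow 4 y).div_const 24)).sub ((hasDerivAt_pow 6 y).div_const 720))
      rw [h.deriv]
      have := sin_ub hy
      nlinarith) x hx
  linarith

/-- For all real `0 ≤ x ≤ 1/2`,
`-x² ≤ cos x/(1 - cos x) - 2/x² + 5/6 ≤ x²`, the middle expression being extended
by its limit value `0` at `x = 0`. -/
theorem cos_ratio_ineq :
    (∀ x : ℝ, 0 < x → x ≤ 1 / 2 →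
      -x ^ 2 ≤ Real.cos x / (1 - Real.cos x) - 2 / x ^ 2 + 5 / 6 ∧
        Real.cos x / (1 - Real.cos x) - 2 / x ^ 2 + 5 / 6 ≤ x ^ 2) ∧
    Filter.Tendsto (fun x : ℝ => Real.cos x / (1 - Real.cos x) - 2 / x ^ 2 + 5 / 6)
      (nhdsWithin 0 (Set.Ioi 0)) (nhds 0) := by
  have main : ∀ x : ℝ, 0 < x → x ≤ 1 / 2 →
      -x ^ 2 ≤ Real.cos x / (1 - Real.cos x) - 2 / x ^ 2 + 5 / 6 ∧
        Real.cos x / (1 - Real.cos x) - 2 / x ^ 2 + 5 / 6 ≤ x ^ 2 := by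
    intro x hx hx2
    set c := Real.cos x with hc
    have hub : c ≤ 1 - x ^ 2 / 2 + x ^ 4 / 24 := cos_ub4 hx.le
    have hlb : 1 - x ^ 2 / 2 + x ^ 4 / 24 - x ^ 6 / 720 ≤ c := cos_lb6 hx.le
    have hxx : x ^ 2 ≤ 1 / 4 := by nlinarith
    have hd : 0 < 1 - c := by nlinarith
    have hx2' : (0:ℝ) < x ^ 2 := by positivity
    constructor
    · rw [← sub_nonneg]
      have heq : c / (1 - c) - 2 / x ^ 2 + 5 / 6 - -x ^ 2 =
          (c * x ^ 2 - 2 * (1 - c) + 5 / 6 * ((1 - c) * x ^ 2) + x ^ 4 * (1 - c)) /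
            ((1 - c) * x ^ 2) := by
        field_simp
        ring
      rw [heq]
      apply div_nonneg _ (by positivity)
      nlinarith [mul_nonneg (sub_nonneg.2 hlb) hx2'.le, sq_nonneg x, sq_nonneg (x^2)]
    · rw [← sub_nonneg]
      have heq : x ^ 2 - (c / (1 - c) - 2 / x ^ 2 + 5 / 6) =
          (x ^ 4 * (1 - c) - (c * x ^ 2 - 2 * (1 - c) + 5 / 6 * ((1 - c) * x ^ 2))) /
            ((1 - c) * x ^ 2) := by
        field_simp
      rw [heq]
      apply div_nonneg _ (by positivity)
      nlinarith [mul_nonneg (sub_nonneg.2 hub) hx2'.le, sq_nonneg x, sq_nonneg (x^2)]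
  refine ⟨main, ?_⟩
  have hmem : ∀ᶠ x : ℝ in nhdsWithin 0 (Set.Ioi 0), x ∈ Set.Ioc 0 (1/2 : ℝ) :=
    Ioc_mem_nhdsGT_of_mem ⟨le_refl 0, by norm_num⟩
  have hg : Filter.Tendsto (fun x : ℝ => -x ^ 2) (nhdsWithin 0 (Set.Ioi 0)) (nhds 0) := by
    have : Filter.Tendsto (fun x : ℝ => -x ^ 2) (nhds 0) (nhds 0) := by
      have := (((continuous_pow 2 : Continuous fun x : ℝ => x ^ 2)).neg).tendsto 0
      simpa [Pi.neg_def] using this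
    exact this.mono_left nhdsWithin_le_nhds
  have hh : Filter.Tendsto (fun x : ℝ => x ^ 2) (nhdsWithin 0 (Set.Ioi 0)) (nhds 0) := by
    have : Filter.Tendsto (fun x : ℝ => x ^ 2) (nhds 0) (nhds 0) := by
      have := ((continuous_pow 2 : Continuous fun x : ℝ => x ^ 2)).tendsto 0
      simpa using this
    exact this.mono_left nhdsWithin_le_nhds
  refine tendsto_of_tendsto_of_tendsto_of_le_of_le' hg hh ?_ ?_
  · filter_upwards [hmem] with x hx
    exact (main x hx.1 hx.2).1
  · filter_upwards [hmem] with x hx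
    exact (main x hx.1 hx.2).2
end

section
/- For every integer k ≥ 2, the (k-1)-st derivative of tan evaluated at π/2 satisfies d^{k-1}/dx^{k-1} tan(x) |_{x=π/2} = -(2i)^k (2^k - 1) B_k / k, equivalently the k-th derivative of log(sin x) at x = π/2 equals (2i)^k (2^k - 1) B_k / k, where B_k is the k-th Bernoulli number. -/
open Real

open Complex

lemma bernoulli_bound (k : ℕ) : |((bernoulli k : ℚ) : ℝ)| ≤ 4 * (k).factorial / 6 ^ k := by
  match k with
  | 0 => norm_num
  | 1 => rw [bernoulli_one]; rw [show (((-1/2 : ℚ)):ℝ) = -1/2 by norm_num]; rw [abs_le]; norm_num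
  | (n+2) =>
    rcases Nat.even_or_odd (n+2) with he | ho
    · obtain ⟨m', hm'⟩ := he
      obtain ⟨m, hm⟩ : ∃ m, n + 2 = 2 * m := ⟨m', by omega⟩
      have hm0 : m ≠ 0 := by omega
      rw [hm]
      set B := ((bernoulli (2*m) : ℚ) : ℝ) with hB
      set S := ((-1 : ℝ) ^ (m + 1) * (2 : ℝ) ^ (2 * m - 1) * π ^ (2 * m) * B / (2 * m).factorial)
        with hSdef
      have h : HasSum (fun n : ℕ => 1 / (n : ℝ) ^ (2 * m)) S := hasSum_zeta_nat hm0
      have hSnn : 0 ≤ S := h.nonneg fun n => by positivity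
      have hS : S ≤ 2 := by
        have h2 := hasSum_zeta_two
        have hle : S ≤ π ^ 2 / 6 := by
          refine hasSum_le (fun j => ?_) h h2
          rcases Nat.eq_zero_or_pos j with rfl | hj
          · simp [hm0]
          · have h1 : (1:ℝ) ≤ (j:ℝ) := by exact_mod_cast hj
            have hje : (j:ℝ) ^ 2 ≤ (j:ℝ) ^ (2*m) := pow_le_pow_right₀ h1 (by omega)
            have hpos : (0:ℝ) < (j:ℝ)^2 := by positivity
            exact div_le_div_of_nonneg_left one_pos.le hpos hje
        nlinarith [Real.pi_lt_d2, Real.pi_pos]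
      have hF : (0:ℝ) < ((2*m).factorial : ℝ) := by exact_mod_cast (2*m).factorial_pos
      have hA : (0:ℝ) < (2:ℝ) ^ (2*m-1) * π ^ (2*m) := by positivity
      have hX : |S| = (2:ℝ) ^ (2*m-1) * π ^ (2*m) * |B| / (2*m).factorial := by
        rw [hSdef]
        rw [abs_div, abs_mul, abs_mul, abs_mul]
        simp [_root_.abs_pow, abs_two, _root_.abs_of_nonneg Real.pi_pos.le, Nat.abs_cast]
      have key : (2:ℝ) ^ (2*m-1) * π ^ (2*m) * |B| ≤ 2 * (2*m).factorial := by
        have : (2:ℝ) ^ (2*m-1) * π ^ (2*m) * |B| / (2*m).factorial ≤ 2 := by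
          rw [← hX, _root_.abs_of_nonneg hSnn]; exact hS
        calc (2:ℝ) ^ (2*m-1) * π ^ (2*m) * |B|
            = ((2:ℝ) ^ (2*m-1) * π ^ (2*m) * |B| / (2*m).factorial) * (2*m).factorial := by
              field_simp
          _ ≤ 2 * (2*m).factorial := by
              exact mul_le_mul_of_nonneg_right this hF.le
      have h2p : (2:ℝ) * ((2:ℝ) ^ (2*m-1) * π ^ (2*m)) = (2*π) ^ (2*m) := by
        have h22 : (2:ℝ) * 2 ^ (2*m-1) = 2 ^ (2*m) := by
          rw [← pow_succ']; congr 1; omega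
        rw [mul_pow, ← mul_assoc, h22]
      have h6 : (6:ℝ)^(2*m) ≤ (2*π)^(2*m) := by
        apply pow_le_pow_left₀ (by norm_num)
        nlinarith [Real.pi_gt_three]
      rw [le_div_iff₀ (by positivity)]
      calc |B| * 6^(2*m) ≤ |B| * (2*π)^(2*m) :=
            mul_le_mul_of_nonneg_left h6 (abs_nonneg _)
        _ = 2 * ((2:ℝ) ^ (2*m-1) * π ^ (2*m) * |B|) := by rw [← h2p]; ring
        _ ≤ 2 * (2 * (2*m).factorial) := by linarith
        _ = 4 * (2*m).factorial := by ring
    · rw [bernoulli_eq_bernoulli'_of_ne_one (by omega), bernoulli'_eq_zero_of_odd ho (by omega)]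
      simp
      positivity

noncomputable def logCosCoeff (k : ℕ) : ℝ :=
  if Even k then (-4 : ℝ) ^ (k / 2) * (2 ^ k - 1) * ((bernoulli k : ℚ) : ℝ) / (k * (k).factorial) else 0


lemma coeff_bound (k : ℕ) : |(k : ℝ) * logCosCoeff k| ≤ 4 * (2/3 : ℝ) ^ k := by
  rcases Nat.even_or_odd k with he | ho
  · obtain ⟨m, hm⟩ := he
    have hm2 : k = 2 * m := by omega
    rcases Nat.eq_zero_or_pos k with rfl | hk0
    · simp [logCosCoeff]
    have hm0 : m ≠ 0 := by omega
    have hkR : (k:ℝ) ≠ 0 := by positivity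
    have hfR : ((k).factorial:ℝ) ≠ 0 := by positivity
    have heq : (k:ℝ) * logCosCoeff k
        = (-4:ℝ)^m * (2^k - 1) * ((bernoulli k : ℚ) : ℝ) / (k).factorial := by
      simp only [logCosCoeff]
      simp only [(show Even k from ⟨m, hm⟩), if_true, show k/2 = m by omega]
      field_simp
    rw [heq, abs_div, abs_mul, abs_mul, _root_.abs_pow]
    rw [show |(-4:ℝ)| = 4 by norm_num, Nat.abs_cast]
    have h1 : |(2:ℝ)^k - 1| = 2^k - 1 := by
      rw [_root_.abs_of_nonneg]; have : (1:ℝ) ≤ 2^k := one_le_pow₀ (by norm_num); linarith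
    rw [h1]
    calc (4:ℝ)^m * (2^k-1) * |((bernoulli k : ℚ) : ℝ)| / (k).factorial
        ≤ (4:ℝ)^m * 2^k * (4 * (k).factorial / 6^k) / (k).factorial := by
          gcongr
          · have : (1:ℝ) ≤ 2^k := one_le_pow₀ (by norm_num); linarith
          · exact bernoulli_bound k
      _ = 4 * (2/3:ℝ)^k := by
          have h4 : (4:ℝ)^m = 2^k := by rw [hm2, pow_mul]; norm_num
          rw [h4]
          field_simp
          rw [show (6:ℝ) = 2*3 by norm_num, mul_pow]
          rw [div_pow]; field_simp
  · simp only [logCosCoeff, if_neg (Nat.not_even_iff_odd.mpr ho), mul_zero, abs_zero]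
    positivity

lemma coeff_cast {k : ℕ} (hk : k ≠ 1) :
    (k : ℂ) * (logCosCoeff k : ℂ) =
      ((bernoulli k : ℚ) : ℂ) * (4 * I) ^ k / (k).factorial
        - ((bernoulli k : ℚ) : ℂ) * (2 * I) ^ k / (k).factorial := by
  rcases Nat.even_or_odd k with he | ho
  · obtain ⟨m, hm⟩ := he
    have hm2 : k = 2 * m := by omega
    rcases Nat.eq_zero_or_pos k with rfl | hk0
    · simp [logCosCoeff]
    have hm0 : m ≠ 0 := by omega
    have hkC : (k:ℂ) ≠ 0 := Nat.cast_ne_zero.mpr (by omega)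
    have hfC : ((k).factorial:ℂ) ≠ 0 := Nat.cast_ne_zero.mpr (k).factorial_ne_zero
    have h2I : (2*I:ℂ)^k = (-4:ℂ)^m := by
      rw [hm2, pow_mul]; norm_num [mul_pow, Complex.I_sq]
    have h4I : (4*I:ℂ)^k = ((-4:ℂ))^m * 2^k := by
      rw [hm2, pow_mul]
      rw [show ((4*I:ℂ))^2 = -16 by rw [mul_pow, Complex.I_sq]; norm_num]
      rw [pow_mul, show ((2:ℂ))^2 = 4 by norm_num, ← mul_pow]
      norm_num
    have hcast : ((logCosCoeff k : ℝ) : ℂ)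
        = (-4:ℂ)^m * (2^k - 1) * ((bernoulli k : ℚ) : ℂ) / (k * (k).factorial) := by
      simp only [logCosCoeff]
      simp only [(show Even k from ⟨m, hm⟩), if_true, show k/2 = m by omega]
      push_cast
      ring
    rw [hcast, h2I, h4I]
    field_simp
  · have hb : bernoulli k = 0 := by
      obtain ⟨j, hj⟩ := ho
      rw [bernoulli_eq_bernoulli'_of_ne_one hk, bernoulli'_eq_zero_of_odd ⟨j, hj⟩ (by omega)]
    rw [hb]
    simp [logCosCoeff, Nat.not_even_iff_odd.mpr ho]

noncomputable def bernEGF (w : ℂ) : ℂ := ∑' k : ℕ, ((bernoulli k : ℚ) : ℂ) * w ^ k / (k).factorial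


lemma bern_norm (k : ℕ) : ‖((bernoulli k : ℚ) : ℂ)‖ = |((bernoulli k : ℚ) : ℝ)| := by
  rw [show ((bernoulli k : ℚ) : ℂ) = (((bernoulli k : ℚ) : ℝ) : ℂ) by push_cast; ring]
  rw [Complex.norm_real, Real.norm_eq_abs]

lemma bernEGF_summable {w : ℂ} (hw : ‖w‖ ≤ 4) :
    Summable fun k : ℕ => ‖((bernoulli k : ℚ) : ℂ) * w ^ k / (k).factorial‖ := by
  refine Summable.of_nonneg_of_le (fun k => norm_nonneg _) (fun k => ?_)
    (((summable_geometric_of_lt_one (by norm_num) (by norm_num)).mul_left 4) :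
      Summable fun k : ℕ => 4 * (2/3:ℝ)^k)
  have hf : (0:ℝ) < ((k).factorial : ℝ) := by exact_mod_cast (k).factorial_pos
  rw [norm_div, norm_mul, norm_pow, bern_norm]
  rw [show ‖((k).factorial : ℂ)‖ = ((k).factorial : ℝ) from Complex.norm_natCast _]
  calc |((bernoulli k : ℚ) : ℝ)| * ‖w‖ ^ k / (k).factorial
      ≤ (4 * (k).factorial / 6 ^ k) * 4 ^ k / (k).factorial := by
        gcongr
        exact bernoulli_bound k
    _ = 4 * (2/3:ℝ)^k := by
        field_simp
        rw [show (6:ℝ) = 2*3 by norm_num, mul_pow, show (4:ℝ) = 2*2 by norm_num, mul_pow]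
        rw [div_pow]; field_simp

lemma bernEGF_mul (w : ℂ) (hw : ‖w‖ ≤ 4) : bernEGF w * (Complex.exp w - 1) = w := by
  have hE : Summable fun n : ℕ => ‖w ^ n / ((n+1)).factorial‖ := by
    refine Summable.of_nonneg_of_le (fun k => norm_nonneg _) (fun n => ?_)
      (Real.summable_pow_div_factorial ‖w‖)
    rw [norm_div, norm_pow, show ‖(((n+1)).factorial : ℂ)‖ = (((n+1)).factorial : ℝ) from
      Complex.norm_natCast _]
    exact div_le_div_of_nonneg_left (by positivity) (by exact_mod_cast (n).factorial_pos)
      (by exact_mod_cast Nat.factorial_le (Nat.le_succ n))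
  have hB := bernEGF_summable hw
  have key : bernEGF w * (∑' n : ℕ, w ^ n / ((n+1)).factorial) = 1 := by
    rw [bernEGF, tsum_mul_tsum_eq_tsum_sum_antidiagonal_of_summable_norm hB hE]
    have : ∀ k : ℕ, (∑ x ∈ Finset.HasAntidiagonal.antidiagonal k,
        ((bernoulli x.1 : ℚ) : ℂ) * w ^ x.1 / (x.1).factorial * (w ^ x.2 / ((x.2+1)).factorial))
        = if k = 0 then 1 else 0 := by
      intro k
      rw [Finset.Nat.sum_antidiagonal_eq_sum_range_succ_mk]
      have hterm : ∀ i ∈ Finset.range (k+1),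
          ((bernoulli i : ℚ) : ℂ) * w ^ i / (i).factorial * (w ^ (k-i) / ((k-i+1)).factorial)
          = ((k+1).choose i : ℂ) * ((bernoulli i : ℚ) : ℂ) * w ^ k / ((k+1)).factorial := by
        intro i hi
        have hik : i ≤ k := by simpa [Nat.lt_succ_iff] using hi
        have hfact : ((k+1).choose i) * (i).factorial * ((k+1-i)).factorial = ((k+1)).factorial :=
          Nat.choose_mul_factorial_mul_factorial (by omega)
        have hpow : w ^ i * w ^ (k - i) = w ^ k := by
          rw [← pow_add]; congr 1; omega
        have h1 : ((k - i + 1)) = (k + 1 - i) := by omega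
        rw [h1]
        have hfC : ∀ m : ℕ, ((m).factorial : ℂ) ≠ 0 :=
          fun m => Nat.cast_ne_zero.mpr (m).factorial_ne_zero
        rw [div_mul_div_comm, mul_assoc, hpow,
          div_eq_div_iff (mul_ne_zero (hfC _) (hfC _)) (hfC _)]
        rw [show (((k+1)).factorial : ℂ) = ((k+1).choose i : ℂ) * ((i).factorial : ℂ)
            * (((k+1-i)).factorial : ℂ) by exact_mod_cast congrArg (Nat.cast (R := ℂ)) hfact.symm]
        ring
      rw [Finset.sum_congr rfl hterm]
      rw [← Finset.sum_div, ← Finset.sum_mul]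
      have hsb : (∑ i ∈ Finset.range (k+1), ((k+1).choose i : ℂ) * ((bernoulli i : ℚ) : ℂ))
          = if k + 1 = 1 then 1 else 0 := by
        have h1 : ((∑ i ∈ Finset.range (k+1), ((k+1).choose i : ℚ) * bernoulli i : ℚ) : ℂ)
            = ((if k + 1 = 1 then (1:ℚ) else 0 : ℚ) : ℂ) := by rw [sum_bernoulli (k+1)]
        rw [apply_ite (fun q : ℚ => (q : ℂ))] at h1
        push_cast at h1
        convert h1 using 1
        simp
      rw [hsb]
      rcases Nat.eq_zero_or_pos k with rfl | hk
      · simp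
      · rw [if_neg (by omega), if_neg (by omega)]
        simp
    rw [tsum_congr this, tsum_ite_eq]
  have hEw : w * (∑' n : ℕ, w ^ n / ((n+1)).factorial) = Complex.exp w - 1 := by
    have hexp : Complex.exp w = ∑' n : ℕ, w ^ n / (n).factorial := by
      rw [Complex.exp_eq_exp_ℂ, NormedSpace.exp_eq_tsum_div]
    have hsum : Summable fun n : ℕ => w ^ n / ((n).factorial : ℂ) := by
      apply Summable.of_norm
      refine Summable.of_nonneg_of_le (fun k => norm_nonneg _) (fun n => ?_)
        (Real.summable_pow_div_factorial ‖w‖)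
      rw [norm_div, norm_pow]
      gcongr
      rw [show ‖(((n).factorial) : ℂ)‖ = (((n).factorial) : ℝ) from Complex.norm_natCast _]
    rw [hexp, Summable.tsum_eq_zero_add hsum]
    simp only [pow_zero, Nat.factorial_zero, Nat.cast_one]
    rw [show (1:ℂ)/1 + (∑' n : ℕ, w ^ (n+1) / ((n+1)).factorial) - 1
        = ∑' n : ℕ, w ^ (n+1) / ((n+1)).factorial by ring]
    rw [← tsum_mul_left]
    exact tsum_congr fun n => by rw [pow_succ]; ring
  calc bernEGF w * (Complex.exp w - 1) = bernEGF w * (w * (∑' n : ℕ, w ^ n / ((n+1)).factorial)) := by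
        rw [hEw]
    _ = w * (bernEGF w * (∑' n : ℕ, w ^ n / ((n+1)).factorial)) := by ring
    _ = w := by rw [key, mul_one]

lemma exp_I_mul_ne_one {t : ℝ} (ht0 : t ≠ 0) (ht : |t| ≤ 4) : Complex.exp (I * t) ≠ 1 := by
  intro h
  rw [Complex.exp_eq_one_iff] at h
  obtain ⟨n, hn⟩ := h
  have hIne : (I : ℂ) ≠ 0 := Complex.I_ne_zero
  have : (t : ℂ) = n * (2 * π) := by
    rw [show (n : ℂ) * (2 * ↑π * I) = (n * (2 * π)) * I by push_cast; ring,
      mul_comm I (t:ℂ)] at hn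
    exact mul_right_cancel₀ hIne hn
  have htr : t = n * (2 * π) := by exact_mod_cast this
  rcases eq_or_ne n 0 with rfl | hn0
  · simp at htr; exact ht0 htr
  · have h1 : (1:ℝ) ≤ |(n:ℝ)| := by exact_mod_cast Int.one_le_abs (by exact_mod_cast hn0)
    have : 2 * π ≤ |t| := by
      rw [htr, abs_mul, _root_.abs_of_nonneg (by positivity : (0:ℝ) ≤ 2 * π)]
      nlinarith [Real.pi_pos]
    nlinarith [Real.pi_gt_three]

lemma bernEGF_tan (y : ℝ) (hy0 : y ≠ 0) (hy : |y| ≤ 1) :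
    bernEGF (4 * I * y) - bernEGF (2 * I * y) + I * y = -(y : ℂ) * (Real.tan y : ℂ) := by
  have h2 : bernEGF (2 * I * y) * (Complex.exp (2 * I * y) - 1) = 2 * I * y := by
    apply bernEGF_mul
    rw [show (2 * I * y : ℂ) = I * (2 * y : ℝ) by push_cast; ring]
    rw [norm_mul, Complex.norm_I, one_mul, Complex.norm_real, Real.norm_eq_abs, abs_mul, _root_.abs_two]
    linarith
  have h4 : bernEGF (4 * I * y) * (Complex.exp (4 * I * y) - 1) = 4 * I * y := by
    apply bernEGF_mul
    rw [show (4 * I * y : ℂ) = I * (4 * y : ℝ) by push_cast; ring]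
    rw [norm_mul, Complex.norm_I, one_mul, Complex.norm_real, Real.norm_eq_abs, abs_mul, show |(4:ℝ)| = 4 by norm_num]
    linarith
  have hne2 : Complex.exp (2 * I * y) ≠ 1 := by
    rw [show (2 * I * y : ℂ) = I * (2 * y : ℝ) by push_cast; ring]
    exact exp_I_mul_ne_one (by simpa using hy0) (by rw [abs_mul, _root_.abs_two]; linarith)
  have hne4 : Complex.exp (4 * I * y) ≠ 1 := by
    rw [show (4 * I * y : ℂ) = I * (4 * y : ℝ) by push_cast; ring]
    refine exp_I_mul_ne_one (by simpa using hy0) ?_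
    rw [abs_mul, show |(4:ℝ)| = 4 by norm_num]; linarith
  set u : ℂ := Complex.exp (I * y) with hu
  have hu0 : u ≠ 0 := Complex.exp_ne_zero _
  have hu2 : Complex.exp (2 * I * y) = u ^ 2 := by
    rw [hu, ← Complex.exp_nat_mul]; ring_nf
  have hu4 : Complex.exp (4 * I * y) = u ^ 4 := by
    rw [hu, ← Complex.exp_nat_mul]; ring_nf
  have hu2ne : u ^ 2 - 1 ≠ 0 := by rw [← hu2]; exact sub_ne_zero.mpr hne2
  have hu4ne : u ^ 4 - 1 ≠ 0 := by rw [← hu4]; exact sub_ne_zero.mpr hne4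
  have hB2 : bernEGF (2 * I * y) = 2 * I * y / (u ^ 2 - 1) := by
    rw [eq_div_iff hu2ne, ← hu2]; exact h2
  have hB4 : bernEGF (4 * I * y) = 4 * I * y / (u ^ 4 - 1) := by
    rw [eq_div_iff hu4ne, ← hu4]; exact h4
  have hcos_ne : Complex.cos y ≠ 0 := by
    rw [← Complex.ofReal_cos]
    simp only [ne_eq, Complex.ofReal_eq_zero]
    have : Real.cos y > 0 := by
      apply Real.cos_pos_of_mem_Ioo
      constructor <;> nlinarith [Real.pi_gt_three, le_abs_self y, neg_abs_le y]
    linarith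
  have htan : (Real.tan y : ℂ) = Complex.sin y / Complex.cos y := by
    rw [Complex.ofReal_tan, Complex.tan_eq_sin_div_cos]
  have hsin : Complex.sin y = (u⁻¹ - u) * I / 2 := by
    rw [Complex.sin, hu, ← Complex.exp_neg]
    ring_nf
  have hcos : Complex.cos y = (u + u⁻¹) / 2 := by
    rw [Complex.cos, hu, ← Complex.exp_neg]
    ring_nf
  rw [hB2, hB4, htan, hsin, hcos]
  have hden : (u + u⁻¹) / 2 ≠ 0 := by rw [hcos] at hcos_ne; exact hcos_ne
  have hu2p : (1 : ℂ) + u ^ 2 ≠ 0 := by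
    intro h
    apply hu4ne
    have h2 : u ^ 2 = -1 := by linear_combination h
    rw [show u ^ 4 = (u ^ 2) ^ 2 by ring, h2]
    norm_num
  field_simp
  have hv := mul_inv_cancel₀ hu2p
  have hp : u ^ 2 + 1 ≠ 0 := by rwa [add_comm]
  rw [show (y:ℂ) * (u ^ 4 - 1) * (u ^ 2 - 1) * (1 - u ^ 2) / (u ^ 2 + 1)
      = y * (u ^ 2 - 1) * (u ^ 2 - 1) * (1 - u ^ 2) by rw [div_eq_iff hp]; ring]
  ring

lemma geom_summable : Summable fun k : ℕ => 4 * (2/3:ℝ)^k :=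
  (summable_geometric_of_lt_one (by norm_num) (by norm_num)).mul_left 4

lemma hasSum_deriv (y : ℝ) (hy : |y| < 1) :
    HasSum (fun n : ℕ => (((n : ℝ) + 1) * logCosCoeff (n + 1)) * y ^ n) (-Real.tan y) := by
  have hy1 : |y| ≤ 1 := hy.le
  have hbnd : ∀ n : ℕ, ‖(((n : ℝ) + 1) * logCosCoeff (n + 1)) * y ^ n‖ ≤ 4 * (2/3:ℝ)^(n+1) := by
    intro n
    rw [Real.norm_eq_abs, abs_mul]
    calc |((n : ℝ) + 1) * logCosCoeff (n + 1)| * |y ^ n|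
        ≤ (4 * (2/3:ℝ)^(n+1)) * 1 := by
          apply mul_le_mul _ _ (abs_nonneg _) (by positivity)
          · have := coeff_bound (n+1); push_cast at this ⊢; exact this
          · rw [_root_.abs_pow]; exact pow_le_one₀ (abs_nonneg y) hy1
      _ = 4 * (2/3:ℝ)^(n+1) := mul_one _
  have hsum : Summable fun n : ℕ => (((n : ℝ) + 1) * logCosCoeff (n + 1)) * y ^ n := by
    apply Summable.of_norm
    exact Summable.of_nonneg_of_le (fun n => norm_nonneg _) hbnd
      ((geom_summable.comp_injective (add_left_injective 1)) : _)
  rcases eq_or_ne y 0 with rfl | hy0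
  · have : (fun n : ℕ => (((n : ℝ) + 1) * logCosCoeff (n + 1)) * (0:ℝ) ^ n)
        = fun _ => 0 := by
      funext n
      match n with
      | 0 => simp [logCosCoeff]
      | (m+1) => simp
    rw [this, Real.tan_zero, neg_zero]
    exact hasSum_zero
  -- y ≠ 0
  have hg : Summable fun k : ℕ => (k : ℝ) * logCosCoeff k * y ^ k := by
    apply Summable.of_norm
    refine Summable.of_nonneg_of_le (fun n => norm_nonneg _) (fun k => ?_) geom_summable
    rw [Real.norm_eq_abs, abs_mul]
    calc |(k : ℝ) * logCosCoeff k| * |y ^ k| ≤ (4 * (2/3:ℝ)^k) * 1 := by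
          apply mul_le_mul (coeff_bound k) _ (abs_nonneg _) (by positivity)
          rw [_root_.abs_pow]; exact pow_le_one₀ (abs_nonneg y) hy1
      _ = _ := mul_one _
  set G : ℝ := ∑' k : ℕ, (k : ℝ) * logCosCoeff k * y ^ k with hG
  have hGf : G = (∑' n : ℕ, (((n : ℝ) + 1) * logCosCoeff (n + 1)) * y ^ n) * y := by
    rw [hG, Summable.tsum_eq_zero_add hg]
    simp only [Nat.cast_zero, zero_mul, zero_add]
    rw [← tsum_mul_right]
    congr 1
    funext n
    push_cast
    rw [pow_succ]
    ring
  -- complex identification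
  have hw2 : ‖(2 * I * (y:ℂ))‖ ≤ 4 := by
    rw [show (2 * I * y : ℂ) = I * ((2 * y : ℝ) : ℂ) by push_cast; ring, norm_mul,
      Complex.norm_I, one_mul, Complex.norm_real, Real.norm_eq_abs, abs_mul, _root_.abs_two]
    linarith
  have hw4 : ‖(4 * I * (y:ℂ))‖ ≤ 4 := by
    rw [show (4 * I * y : ℂ) = I * ((4 * y : ℝ) : ℂ) by push_cast; ring, norm_mul,
      Complex.norm_I, one_mul, Complex.norm_real, Real.norm_eq_abs, abs_mul,
      show |(4:ℝ)| = 4 by norm_num]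
    linarith
  have S4 : HasSum (fun k : ℕ => ((bernoulli k : ℚ) : ℂ) * (4 * I * y) ^ k / (k).factorial)
      (bernEGF (4 * I * y)) := ((bernEGF_summable hw4).of_norm).hasSum
  have S2 : HasSum (fun k : ℕ => ((bernoulli k : ℚ) : ℂ) * (2 * I * y) ^ k / (k).factorial)
      (bernEGF (2 * I * y)) := ((bernEGF_summable hw2).of_norm).hasSum
  have Sif : HasSum (fun k : ℕ => if k = 1 then I * (y:ℂ) else 0) (I * y) := hasSum_ite_eq 1 _
  have hC : HasSum (fun k : ℕ => (((k : ℝ) * logCosCoeff k * y ^ k : ℝ) : ℂ))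
      (bernEGF (4 * I * y) - bernEGF (2 * I * y) + I * y) := by
    refine HasSum.congr_fun ((S4.sub S2).add Sif) ?_
    intro k
    rcases eq_or_ne k 1 with rfl | hk
    · rw [show logCosCoeff 1 = 0 by simp [logCosCoeff], bernoulli_one]
      push_cast
      norm_num
      ring
    · rw [if_neg hk, add_zero]
      rw [mul_pow (4*I) (y:ℂ) k, mul_pow (2*I) (y:ℂ) k]
      push_cast
      linear_combination (y:ℂ)^k * (coeff_cast hk)
  have hGC : HasSum (fun k : ℕ => (((k : ℝ) * logCosCoeff k * y ^ k : ℝ) : ℂ)) ((G : ℝ) : ℂ) :=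
    (hg.hasSum).mapL Complex.ofRealCLM
  have hGeq : (G : ℂ) = ((- (y * Real.tan y) : ℝ) : ℂ) := by
    rw [hGC.unique hC, bernEGF_tan y hy0 hy1]
    push_cast
    ring
  have hGr : G = -(y * Real.tan y) := by exact_mod_cast hGeq
  rw [hsum.hasSum_iff]
  have := hGf.symm.trans hGr
  field_simp at this
  exact this

noncomputable def logCosSeries : FormalMultilinearSeries ℝ ℝ ℝ :=
  FormalMultilinearSeries.ofScalars ℝ logCosCoeff

lemma coeff_le_four (n : ℕ) : |logCosCoeff n| ≤ 4 := by
  rcases Nat.eq_zero_or_pos n with rfl | hn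
  · simp [logCosCoeff]
  · have h1 : (1:ℝ) ≤ (n:ℝ) := by exact_mod_cast hn
    have := coeff_bound n
    rw [abs_mul, Nat.abs_cast] at this
    have h2 : |logCosCoeff n| ≤ (n:ℝ) * |logCosCoeff n| := le_mul_of_one_le_left (abs_nonneg _) h1
    have h3 : 4 * (2/3:ℝ)^n ≤ 4 := by
      have : (2/3:ℝ)^n ≤ 1 := pow_le_one₀ (by norm_num) (by norm_num)
      linarith
    linarith
  
lemma logCosSeries_radius : 1 ≤ logCosSeries.radius := by
  apply FormalMultilinearSeries.le_radius_of_bound _ 4 (r := 1)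
  intro n
  rw [logCosSeries, FormalMultilinearSeries.ofScalars_norm]
  simp only [NNReal.coe_one, one_pow, mul_one, Real.norm_eq_abs]
  exact coeff_le_four n

lemma hasFPowerSeries_logsin :
    HasFPowerSeriesOnBall (fun x : ℝ => Real.log (Real.sin x)) logCosSeries (Real.pi / 2) 1 := by
  have hrad := logCosSeries_radius
  have hS : HasFPowerSeriesOnBall logCosSeries.sum logCosSeries 0 1 :=
    (logCosSeries.hasFPowerSeriesOnBall (lt_of_lt_of_le one_pos hrad)).mono one_pos hrad
  -- derivative of the sum is -tan on the ball
  have hderiv : ∀ y : ℝ, |y| < 1 → HasDerivAt logCosSeries.sum (-Real.tan y) y := by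
    intro y hy
    have hmem : y ∈ Metric.eball (0:ℝ) 1 := by
      rw [Metric.mem_eball, edist_dist, Real.dist_eq, sub_zero]
      exact ENNReal.ofReal_lt_one.mpr hy
    have hfd := hS.fderiv.hasSum hmem
    rw [zero_add] at hfd
    have happ := hfd.mapL (ContinuousLinearMap.apply ℝ ℝ (1:ℝ))
    have hterm : ∀ n : ℕ, (ContinuousLinearMap.apply ℝ ℝ (1:ℝ))
        (logCosSeries.derivSeries n (fun _ => y))
        = (((n : ℝ) + 1) * logCosCoeff (n + 1)) * y ^ n := by
      intro n
      have h1 : (fun _ : Fin n => y) = fun _ : Fin n => y • (1:ℝ) := by simp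
      rw [ContinuousLinearMap.apply_apply, h1,
        (logCosSeries.derivSeries n).map_smul_univ (fun _ : Fin n => y) (fun _ => (1:ℝ))]
      simp only [Finset.prod_const, Finset.card_univ, Fintype.card_fin, smul_eq_mul]
      rw [ContinuousLinearMap.smul_apply, logCosSeries.derivSeries_apply_diag n (1:ℝ)]
      rw [logCosSeries, FormalMultilinearSeries.ofScalars_apply_eq]
      simp only [smul_eq_mul]
      push_cast
      ring
    rw [funext hterm] at happ
    have huniq := (hasSum_deriv y hy).unique happ
    have hdiff : DifferentiableAt ℝ logCosSeries.sum y :=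
      ((hS.analyticAt_of_mem hmem).differentiableAt : _)
    rw [ContinuousLinearMap.apply_apply, fderiv_apply_one_eq_deriv] at huniq
    rw [huniq]
    exact hdiff.hasDerivAt
  have hg : ∀ y : ℝ, |y| < 1 → HasDerivAt (fun t : ℝ => Real.log (Real.cos t)) (-Real.tan y) y := by
    intro y hy
    have hcos : Real.cos y > 0 := by
      apply Real.cos_pos_of_mem_Ioo
      constructor <;> nlinarith [Real.pi_gt_three, le_abs_self y, neg_abs_le y]
    have h := (Real.hasDerivAt_cos y).log (ne_of_gt hcos)
    rw [Real.tan_eq_sin_div_cos, ← neg_div]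
    exact h
  have hball : ∀ y : ℝ, y ∈ Metric.ball (0:ℝ) 1 → |y| < 1 := by
    intro y hy
    rwa [Metric.mem_ball, Real.dist_eq, sub_zero] at hy
  have hS0 : logCosSeries.sum 0 = 0 := by
    have h0 : HasSum (fun n : ℕ => logCosSeries n (fun _ => (0:ℝ))) (logCosSeries.sum (0 + 0)) :=
      hS.hasSum (Metric.mem_eball_self one_pos)
    rw [zero_add] at h0
    have hz : (fun n : ℕ => logCosSeries n (fun _ => (0:ℝ))) = fun _ => 0 := by
      funext n
      rw [logCosSeries, FormalMultilinearSeries.ofScalars_apply_eq]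
      match n with
      | 0 => norm_num [logCosCoeff]
      | (m+1) => simp
    rw [hz] at h0
    exact h0.unique hasSum_zero
  have hEq : Set.EqOn logCosSeries.sum (fun t : ℝ => Real.log (Real.cos t))
      (Metric.ball (0:ℝ) 1) := by
    refine Convex.eqOn_of_fderivWithin_eq (convex_ball 0 1)
      (fun y hy => ((hderiv y (hball y hy)).differentiableAt).differentiableWithinAt)
      (fun y hy => ((hg y (hball y hy)).differentiableAt).differentiableWithinAt)
      (Metric.isOpen_ball.uniqueDiffOn) (fun y hy => ?_) (Metric.mem_ball_self one_pos) ?_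
    · rw [fderivWithin_of_isOpen Metric.isOpen_ball hy, fderivWithin_of_isOpen Metric.isOpen_ball hy,
        (hderiv y (hball y hy)).hasFDerivAt.fderiv, (hg y (hball y hy)).hasFDerivAt.fderiv]
    · rw [hS0]
      simp
  refine ⟨hrad, one_pos, fun {y} hy => ?_⟩
  have habs : |y| < 1 := by
    rw [Metric.mem_eball, edist_dist, Real.dist_eq, sub_zero] at hy
    exact ENNReal.ofReal_lt_one.mp hy
  have hsum := hS.hasSum hy
  rw [zero_add] at hsum
  have hval : logCosSeries.sum y = Real.log (Real.sin (Real.pi/2 + y)) := by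
    rw [hEq (by rwa [Metric.mem_ball, Real.dist_eq, sub_zero])]
    rw [Real.sin_add]
    simp
  rwa [hval] at hsum

/-- For every integer `k ≥ 2`, the `k`-th derivative of `log(sin x)` at `x = π/2`
equals `(2i)^k (2^k - 1) B_k / k`, where `B_k` is the `k`-th Bernoulli number
(defined by `z/(e^z - 1) = Σ B_k z^k/k!`); equivalently the `(k-1)`-st derivative
of `tan` (at the corresponding point) is its negative. -/
theorem iteratedDeriv_log_sin (k : ℕ) (hk : 2 ≤ k) :
    (iteratedDeriv k (fun x : ℝ => Real.log (Real.sin x)) (Real.pi / 2) : ℂ) =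
      (2 * Complex.I) ^ k * (2 ^ k - 1) * ((bernoulli k : ℚ) : ℂ) / (k : ℂ) := by
  have hF := Complex.ofRealCLM.comp_hasFPowerSeriesOnBall hasFPowerSeries_logsin
  have hfs := hF.factorial_smul (1:ℝ) k
  have hps : (Complex.ofRealCLM.compFormalMultilinearSeries logCosSeries) k (fun _ => (1:ℝ))
      = ((logCosCoeff k : ℝ) : ℂ) := by
    rw [ContinuousLinearMap.compFormalMultilinearSeries_apply,
      ContinuousLinearMap.compContinuousMultilinearMap_coe]
    simp only [Function.comp_apply]
    rw [logCosSeries, FormalMultilinearSeries.ofScalars_apply_eq]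
    simp
  have hid : iteratedDeriv k (fun x : ℝ => ((Real.log (Real.sin x) : ℝ) : ℂ)) (Real.pi/2)
      = ((k).factorial : ℂ) * ((logCosCoeff k : ℝ) : ℂ) := by
    rw [iteratedDeriv_eq_iteratedFDeriv]
    rw [show (fun x : ℝ => ((Real.log (Real.sin x) : ℝ) : ℂ))
        = (Complex.ofRealCLM ∘ fun x : ℝ => Real.log (Real.sin x)) from rfl]
    rw [← hfs, hps, nsmul_eq_mul]
  rw [hid]
  have hkC : (k:ℂ) ≠ 0 := Nat.cast_ne_zero.mpr (by omega)
  have hfC : ((k).factorial:ℂ) ≠ 0 := Nat.cast_ne_zero.mpr (k).factorial_ne_zero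
  have hcc := coeff_cast (show k ≠ 1 by omega)
  rw [show ((4:ℂ) * I)^k = (2*I)^k * 2^k by rw [show (4:ℂ)*I = (2*I)*2 by ring, mul_pow]] at hcc
  field_simp at hcc
  rw [eq_div_iff hkC]
  linear_combination hcc
end
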